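/- arXiv:1112.6415 — 6 statements merged into one kernel-verified Lean document; each statement's English description precedes it below -/
import Mathlib

section
/- Let G be a locally compact group with a proper cobounded (C,r)-quasi-action on a c-coarsely geodesic metric space X. Then G is compactly generated; specifically, for any fixed x ∈ X, the set K = {s ∈ G : d(s·x, x) ≤ C(2r+c+1)+4r} is relatively compact and every element of G is a product of finitely many elements of any compact symmetric neighbourhood of the identity containing K. -/
open Pointwise

/-- `f` is a `(C,r)`-quasi-isometric embedding. -/
def IsQIEmbedding {X Y : Type*} [PseudoMetricSpace X] [PseudoMetricSpace Y]
    (C r : ℝ) (f : X → Y) : Prop :=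
  ∀ x y : X, C⁻¹ * dist x y - r ≤ dist (f x) (f y) ∧ dist (f x) (f y) ≤ C * dist x y + r

/-- `f` is `r`-coarsely onto. -/
def IsCoarselyOnto {X Y : Type*} [PseudoMetricSpace X] [PseudoMetricSpace Y]
    (r : ℝ) (f : X → Y) : Prop :=
  ∀ y : Y, ∃ x : X, dist (f x) y ≤ r

/-- `f` is a `(C,r)`-quasi-isometry. -/
def IsQuasiIsometry {X Y : Type*} [PseudoMetricSpace X] [PseudoMetricSpace Y]
    (C r : ℝ) (f : X → Y) : Prop :=
  IsQIEmbedding C r f ∧ IsCoarselyOnto r f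


/-- `X` is `c`-coarsely geodesic. -/
def IsCoarselyGeodesic (X : Type*) [PseudoMetricSpace X] (c : ℝ) : Prop :=
  ∀ x y : X, ∃ a : ℝ, 0 ≤ a ∧ ∃ f : ℝ → X, f 0 = x ∧ f a = y ∧
    ∀ s ∈ Set.Icc (0:ℝ) a, ∀ t ∈ Set.Icc (0:ℝ) a,
      |s - t| - c ≤ dist (f s) (f t) ∧ dist (f s) (f t) ≤ |s - t| + c

/-- A `(C,r)`-quasi-action of a locally compact group on a metric space. -/
def IsQuasiAction {G X : Type*} [Group G] [TopologicalSpace G] [PseudoMetricSpace X]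
    (C r : ℝ) (act : G → X → X) : Prop :=
  (∀ s : G, IsQuasiIsometry C r (act s)) ∧
  (∀ x : X, dist (act 1 x) x ≤ r) ∧
  (∀ (s t : G) (x : X), dist (act s (act t x)) (act (s * t) x) ≤ r) ∧
  (∀ L : Set G, IsCompact L → ∀ x : X, Bornology.IsBounded ((fun s => act s x) '' L))

/-- A quasi-action is proper. -/
def IsProperQA {G X : Type*} [Group G] [TopologicalSpace G] [PseudoMetricSpace X]
    (act : G → X → X) : Prop :=
  ∀ R : ℝ, 0 ≤ R → ∀ x : X, IsCompact (closure {s : G | dist (act s x) x ≤ R})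

/-- A quasi-action is cobounded with constant `r`. -/
def IsCoboundedQA {G X : Type*} [Group G] [TopologicalSpace G] [PseudoMetricSpace X]
    (r : ℝ) (act : G → X → X) : Prop :=
  ∀ x y : X, ∃ s : G, dist (act s x) y ≤ r

/-! Walk from `x` to `g·x` along a coarse geodesic in unit steps and shadow each point of the walk
by an orbit point `σᵢ·x`, with `σ₀ = 1` and `σₙ = g`. Consecutive orbit points are
`(2r + c + 1)`-close, so the quasi-action axioms put every increment `σᵢ⁻¹σᵢ₊₁` in `K`, and
`g = ∏ σᵢ⁻¹σᵢ₊₁` is a product of elements of `V`. Relative compactness of `K` is properness. -/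

theorem IsCoarselyGeodesic.exists_chain {X : Type*} [PseudoMetricSpace X] {c : ℝ}
    (hX : IsCoarselyGeodesic X c) (x y : X) :
    ∃ N : ℕ, ∃ p : ℕ → X, p 0 = x ∧ (∀ i, N ≤ i → p i = y) ∧
      ∀ i, dist (p i) (p (i + 1)) ≤ 1 + c := by
  obtain ⟨a, ha, f, hf0, hfa, hf⟩ := hX x y
  have hmem : ∀ i : ℕ, min (i : ℝ) a ∈ Set.Icc 0 a := fun i =>
    ⟨le_min i.cast_nonneg ha, min_le_right _ _⟩
  refine ⟨⌈a⌉₊, fun i => f (min (i : ℝ) a), by simpa [ha] using hf0, fun i hi => ?_, fun i => ?_⟩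
  · simp only [min_eq_right (Nat.ceil_le.mp hi), hfa]
  · have hunit : |min (i : ℝ) a - min ((i + 1 : ℕ) : ℝ) a| ≤ 1 := by
      simpa using abs_min_sub_min_le_max (i : ℝ) a ((i + 1 : ℕ) : ℝ) a
    linarith [(hf _ (hmem i) _ (hmem (i + 1))).2]

theorem IsQuasiAction.dist_act_inv_mul_le {G X : Type*} [Group G] [TopologicalSpace G]
    [PseudoMetricSpace X] {C r : ℝ} {act : G → X → X} (hqa : IsQuasiAction C r act)
    (u v : G) (x : X) :
    dist (act (u⁻¹ * v) x) x ≤ C * dist (act v x) (act u x) + 4 * r := by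
  obtain ⟨hqi, hone, hmul, -⟩ := hqa
  have hcancel := hmul u⁻¹ u x
  rw [inv_mul_cancel] at hcancel
  linarith [hmul u⁻¹ v x, dist_comm (act u⁻¹ (act v x)) (act (u⁻¹ * v) x),
    ((hqi u⁻¹).1 (act v x) (act u x)).2, hone x,
    dist_triangle4 (act (u⁻¹ * v) x) (act u⁻¹ (act v x)) (act u⁻¹ (act u x)) (act 1 x),
    dist_triangle (act (u⁻¹ * v) x) (act 1 x) x]

theorem IsCoboundedQA.exists_shadow {G X : Type*} [Group G] [TopologicalSpace G]
    [PseudoMetricSpace X] {r : ℝ} {act : G → X → X} (hcob : IsCoboundedQA r act)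
    (hone : ∀ x, dist (act 1 x) x ≤ r) (hr : 0 ≤ r) {x : X} {g : G} {N : ℕ} {p : ℕ → X}
    (hp0 : p 0 = x) (hpN : ∀ i, N ≤ i → p i = act g x) :
    ∃ σ : ℕ → G, σ 0 = 1 ∧ σ (N + 1) = g ∧ ∀ i, dist (act (σ i) x) (p i) ≤ r := by
  classical
  refine ⟨fun i => if i = 0 then 1 else if N ≤ i then g else (hcob x (p i)).choose,
    rfl, by simp, fun i => ?_⟩
  by_cases h0 : i = 0
  · simpa [h0, hp0] using hone x
  by_cases hN : N ≤ i
  · simpa [h0, hN, hpN i hN] using hr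
  · simpa [h0, hN] using (hcob x (p i)).choose_spec

theorem Set.mem_pow_of_inv_mul_mem {G : Type*} [Group G] {V : Set G} {σ : ℕ → G}
    (h0 : σ 0 = 1) (hV : ∀ i, (σ i)⁻¹ * σ (i + 1) ∈ V) (n : ℕ) : σ n ∈ V ^ n := by
  induction n with
  | zero => simp [h0]
  | succ n ih =>
    rw [pow_succ, ← mul_inv_cancel_left (σ n) (σ (n + 1))]
    exact Set.mul_mem_mul ih (hV n)

theorem svarc_milnor_compactly_generated_general
    {G X : Type*} [Group G] [TopologicalSpace G]
    [PseudoMetricSpace X]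
    (C r c : ℝ) (hC : 1 ≤ C) (hr : 0 ≤ r) (hc : 0 ≤ c)
    (hgeo : IsCoarselyGeodesic X c)
    (act : G → X → X)
    (hqa : IsQuasiAction C r act)
    (hproper : IsProperQA act)
    (hcob : IsCoboundedQA r act) :
    ∀ x : X,
      IsCompact (closure {s : G | dist (act s x) x ≤ C * (2*r + c + 1) + 4*r}) ∧
      ∀ V : Set G, IsCompact V → V ∈ nhds (1 : G) → V⁻¹ = V →
        {s : G | dist (act s x) x ≤ C * (2*r + c + 1) + 4*r} ⊆ V →
        ∀ g : G, ∃ n : ℕ, g ∈ V ^ n := by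
  intro x
  refine ⟨hproper _ (by nlinarith) x, fun V _ _ _ hKV g => ?_⟩
  obtain ⟨N, p, hp0, hpN, hstep⟩ := hgeo.exists_chain x (act g x)
  obtain ⟨σ, hσ0, hσN, hσp⟩ := hcob.exists_shadow hqa.2.1 hr hp0 hpN
  have hclose : ∀ i, dist (act (σ (i + 1)) x) (act (σ i) x) ≤ 2 * r + c + 1 := fun i => by
    linarith [hσp i, hσp (i + 1), hstep i, dist_comm (act (σ i) x) (p i),
      dist_comm (p i) (p (i + 1)),
      dist_triangle4 (act (σ (i + 1)) x) (p (i + 1)) (p i) (act (σ i) x)]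
  have hinc : ∀ i, (σ i)⁻¹ * σ (i + 1) ∈ V := fun i => hKV <|
    (hqa.dist_act_inv_mul_le _ _ x).trans <| by gcongr; exact hclose i
  exact ⟨N + 1, hσN ▸ Set.mem_pow_of_inv_mul_mem hσ0 hinc (N + 1)⟩

/-- a group with a proper cobounded quasi-action on a coarsely geodesic
space is compactly generated, where the generating set may be taken to be any compact
symmetric neighbourhood of the identity containing
`{s : d(s·x, x) ≤ C(2r+c+1)+4r}` (which is relatively compact). -/
theorem svarc_milnor_compactly_generated
    {G X : Type*} [Group G] [TopologicalSpace G] [IsTopologicalGroup G]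
    [LocallyCompactSpace G] [PseudoMetricSpace X]
    (C r c : ℝ) (hC : 1 ≤ C) (hr : 0 ≤ r) (hc : 0 ≤ c)
    (hgeo : IsCoarselyGeodesic X c)
    (act : G → X → X)
    (hqa : IsQuasiAction C r act)
    (hproper : IsProperQA act)
    (hcob : IsCoboundedQA r act) :
    ∀ x : X,
      IsCompact (closure {s : G | dist (act s x) x ≤ C * (2*r + c + 1) + 4*r}) ∧
      ∀ V : Set G, IsCompact V → V ∈ nhds (1 : G) → V⁻¹ = V →
        {s : G | dist (act s x) x ≤ C * (2*r + c + 1) + 4*r} ⊆ V →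
        ∀ g : G, ∃ n : ℕ, g ∈ V ^ n :=
  svarc_milnor_compactly_generated_general C r c hC hr hc hgeo act hqa hproper hcob
end

section
/- Let G be a locally compact group with a proper cobounded quasi-action on a coarsely geodesic metric space X. Then for any fixed x ∈ X, the orbit map s ↦ s·x : G → X is a quasi-isometry, where G carries the word-length metric with respect to a compact symmetric generating neighbourhood of the identity. -/
open Pointwise

/-- Word length of `s⁻¹ * t` with respect to the set `K`. -/
noncomputable def wordDist {G : Type*} [Group G] (K : Set G) (s t : G) : ℕ :=
  sInf {n : ℕ | s⁻¹ * t ∈ K ^ n}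

/-! The orbit map is coarsely Lipschitz: each element of `K` moves `x` a bounded distance, so a
word of length `n` moves it at most `n` times as far. Conversely, a coarse geodesic from s·x
to t·x is cut into unit steps whose endpoints are shadowed, by coboundedness, by orbit points
gᵢ·x. Consecutive increments `gᵢ⁻¹ gᵢ₊₁` move `x` a bounded distance, so by properness they
lie in a compact set, which is covered by a single power `K ^ N` because the open sets
`K ^ n * interior K` increase and exhaust `G`. -/

open Topology

section

variable {G X : Type*} [Group G]

lemma Set.inv_mul_mem_pow_mul_of_chain {K : Set G} {N : ℕ} (g : ℕ → G) :
    ∀ m : ℕ, (∀ i < m, (g i)⁻¹ * g (i + 1) ∈ K ^ N) → (g 0)⁻¹ * g m ∈ K ^ (m * N)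
  | 0, _ => by simp
  | m + 1, h => by
    have hprod : (g 0)⁻¹ * g (m + 1) = ((g 0)⁻¹ * g m) * ((g m)⁻¹ * g (m + 1)) := by group
    rw [hprod, Nat.succ_mul, pow_add]
    exact Set.mul_mem_mul (inv_mul_mem_pow_mul_of_chain g m fun i hi => h i (by omega))
      (h m m.lt_succ_self)

lemma Set.exists_subset_pow_of_isCompact [TopologicalSpace G] [ContinuousConstSMul G G]
    {K L : Set G} (hK : K ∈ 𝓝 1) (hKgen : ∀ g : G, ∃ n : ℕ, g ∈ K ^ n) (hL : IsCompact L) :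
    ∃ N : ℕ, L ⊆ K ^ N := by
  have hmono : Monotone fun n : ℕ => K ^ n * interior K := fun m n hmn =>
    Set.mul_subset_mul_right (Set.pow_subset_pow_right (mem_of_mem_nhds hK) hmn)
  have hcover : L ⊆ ⋃ n : ℕ, K ^ n * interior K := fun g _ => by
    obtain ⟨n, hn⟩ := hKgen g
    exact Set.mem_iUnion.2
      ⟨n, mul_one g ▸ Set.mul_mem_mul hn (mem_interior_iff_mem_nhds.2 hK)⟩
  obtain ⟨n, hn⟩ := hL.elim_directed_cover _ (fun _ => isOpen_interior.mul_left) hcover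
    hmono.directed_le
  refine ⟨n + 1, hn.trans ?_⟩
  rw [pow_succ]
  exact Set.mul_subset_mul_left interior_subset

lemma wordDist_le_of_inv_mul_mem_pow {K : Set G} {s t : G} {n : ℕ} (h : s⁻¹ * t ∈ K ^ n) :
    wordDist K s t ≤ n :=
  Nat.sInf_le h

lemma inv_mul_mem_pow_wordDist {K : Set G} (hKgen : ∀ g : G, ∃ n : ℕ, g ∈ K ^ n) (s t : G) :
    s⁻¹ * t ∈ K ^ wordDist K s t :=
  Nat.sInf_mem (hKgen _)

namespace IsCoarselyGeodesic

variable [PseudoMetricSpace X] {c : ℝ}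

lemma nonneg (h : IsCoarselyGeodesic X c) (x : X) : 0 ≤ c := by
  obtain ⟨a, ha, f, -, -, hf⟩ := h x x
  simpa using (hf 0 ⟨le_rfl, ha⟩ 0 ⟨le_rfl, ha⟩).1

lemma exists_chain_s6 (h : IsCoarselyGeodesic X c) (x y : X) :
    ∃ m : ℕ, 0 < m ∧ (m : ℝ) ≤ dist x y + c + 1 ∧
      ∃ p : ℕ → X, p 0 = x ∧ p m = y ∧ ∀ i, dist (p i) (p (i + 1)) ≤ 1 + c := by
  obtain ⟨a, ha, f, hf0, hfa, hf⟩ := h x y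
  have hmem : ∀ u : ℝ, 0 ≤ u → min u a ∈ Set.Icc 0 a := fun u hu =>
    ⟨le_min hu ha, min_le_right _ _⟩
  have hlen : a ≤ dist x y + c := by
    have := (hf a ⟨ha, le_rfl⟩ 0 ⟨le_rfl, ha⟩).1
    rw [hfa, hf0, sub_zero, abs_of_nonneg ha, dist_comm] at this
    linarith
  refine ⟨max ⌈a⌉₊ 1, by positivity, ?_, fun i => f (min (i : ℝ) a), ?_, ?_, fun i => ?_⟩
  · have := Nat.ceil_lt_add_one ha
    push_cast
    exact max_le (by linarith) (by linarith)
  · simpa [min_eq_left ha] using hf0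
  · have : a ≤ ((max ⌈a⌉₊ 1 : ℕ) : ℝ) :=
      (Nat.le_ceil a).trans (by exact_mod_cast le_max_left _ _)
    show f (min _ a) = y
    rw [min_eq_right this, hfa]
  · have hstep : |min ((i + 1 : ℕ) : ℝ) a - min (i : ℝ) a| ≤ 1 := by
      push_cast
      rw [abs_le]
      constructor <;> cases min_cases ((i : ℝ) + 1) a <;> cases min_cases (i : ℝ) a <;> linarith
    rw [dist_comm]
    exact (hf _ (hmem _ (by positivity)) _ (hmem _ i.cast_nonneg)).2.trans (by linarith)

end IsCoarselyGeodesic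

namespace IsQuasiAction

variable [TopologicalSpace G] [PseudoMetricSpace X] {C r : ℝ} {act : G → X → X}

lemma r_nonneg (h : IsQuasiAction C r act) (x : X) : 0 ≤ r :=
  dist_nonneg.trans (h.2.1 x)

lemma dist_act_mul_le (h : IsQuasiAction C r act) (s k : G) (x : X) :
    dist (act (s * k) x) (act s x) ≤ C * dist (act k x) x + 2 * r := by
  calc dist (act (s * k) x) (act s x)
      ≤ dist (act (s * k) x) (act s (act k x)) + dist (act s (act k x)) (act s x) :=
        dist_triangle _ _ _
    _ ≤ r + (C * dist (act k x) x + r) := by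
        gcongr
        · rw [dist_comm]; exact h.2.2.1 s k x
        · exact ((h.1 s).1 _ _).2
    _ = C * dist (act k x) x + 2 * r := by ring

lemma dist_le_of_inv_mul_mem_pow (h : IsQuasiAction C r act) (hC : 0 ≤ C) {K : Set G} {B : ℝ}
    {x : X} (hB : ∀ k ∈ K, dist (act k x) x ≤ B) :
    ∀ (n : ℕ) (s t : G), s⁻¹ * t ∈ K ^ n → dist (act s x) (act t x) ≤ n * (C * B + 2 * r)
  | 0, s, t, hst => by
    rw [pow_zero, Set.mem_one, inv_mul_eq_one] at hst
    simp [hst]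
  | n + 1, s, t, hst => by
    rw [pow_succ] at hst
    obtain ⟨g, hg, k, hk, hgk⟩ := hst
    have ht : t = s * g * k := by
      rw [mul_assoc, show g * k = s⁻¹ * t from hgk, mul_inv_cancel_left]
    have hg' : s⁻¹ * (s * g) ∈ K ^ n := by rwa [inv_mul_cancel_left]
    calc dist (act s x) (act t x)
        ≤ dist (act s x) (act (s * g) x) + dist (act (s * g) x) (act t x) := dist_triangle _ _ _
      _ ≤ n * (C * B + 2 * r) + (C * B + 2 * r) := by
          gcongr
          · exact dist_le_of_inv_mul_mem_pow h hC hB n s (s * g) hg'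
          · rw [ht, dist_comm]
            exact (h.dist_act_mul_le _ k x).trans (by gcongr; exact hB k hk)
      _ = (n + 1 : ℕ) * (C * B + 2 * r) := by push_cast; ring

lemma dist_act_inv_mul_le_s6 (h : IsQuasiAction C r act) (hC : 0 < C) (u v : G) (x : X) :
    dist (act (u⁻¹ * v) x) x ≤ C * (dist (act u x) (act v x) + 2 * r) := by
  have hlow := ((h.1 u).1 (act (u⁻¹ * v) x) x).1
  have hcomp : dist (act u (act (u⁻¹ * v) x)) (act v x) ≤ r := by
    simpa only [mul_inv_cancel_left] using h.2.2.1 u (u⁻¹ * v) x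
  have hup : dist (act u (act (u⁻¹ * v) x)) (act u x) ≤ dist (act u x) (act v x) + r := by
    linarith [dist_triangle (act u (act (u⁻¹ * v) x)) (act v x) (act u x),
      dist_comm (act v x) (act u x)]
  rw [← inv_mul_le_iff₀ hC]
  linarith

end IsQuasiAction

lemma IsCoboundedQA.exists_lift_chain [TopologicalSpace G] [PseudoMetricSpace X] {r : ℝ}
    {act : G → X → X} (hcob : IsCoboundedQA r act) (hr : 0 ≤ r) {x : X} {s t : G} {m : ℕ}
    (hm : 0 < m) {p : ℕ → X} (hp0 : p 0 = act s x) (hpm : p m = act t x) :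
    ∃ g : ℕ → G, g 0 = s ∧ g m = t ∧ ∀ i, dist (act (g i) x) (p i) ≤ r := by
  choose σ hσ using fun i => hcob x (p i)
  refine ⟨fun i => if i = 0 then s else if i = m then t else σ i, by simp, by simp [hm.ne'],
    fun i => ?_⟩
  dsimp only
  split_ifs with h0 hm'
  · simpa [h0, hp0] using hr
  · simpa [hm', hpm] using hr
  · exact hσ i

lemma wordDist_le_of_subset_pow [TopologicalSpace G] [PseudoMetricSpace X] {C r c : ℝ}
    {act : G → X → X} (hqa : IsQuasiAction C r act) (hC : 0 < C)
    (hgeo : IsCoarselyGeodesic X c) (hcob : IsCoboundedQA r act) {K : Set G} {N : ℕ} {x : X}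
    (hN : {g : G | dist (act g x) x ≤ C * (4 * r + 1 + c)} ⊆ K ^ N) (s t : G) :
    (wordDist K s t : ℝ) ≤ N * (dist (act s x) (act t x) + c + 1) := by
  obtain ⟨m, hm, hmlen, p, hp0, hpm, hp⟩ := hgeo.exists_chain_s6 (act s x) (act t x)
  obtain ⟨g, hg0, hgm, hg⟩ := hcob.exists_lift_chain (hqa.r_nonneg x) hm hp0 hpm
  have hstep : ∀ i < m, (g i)⁻¹ * g (i + 1) ∈ K ^ N := fun i _ => hN <| by
    have hd : dist (act (g i) x) (act (g (i + 1)) x) ≤ r + (1 + c) + r :=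
      (dist_triangle4 _ (p i) (p (i + 1)) _).trans <| by
        gcongr
        · exact hg i
        · exact hp i
        · rw [dist_comm]; exact hg (i + 1)
    exact (hqa.dist_act_inv_mul_le_s6 hC _ _ x).trans (mul_le_mul_of_nonneg_left (by linarith) hC.le)
  have hword := wordDist_le_of_inv_mul_mem_pow
    (hg0 ▸ hgm ▸ Set.inv_mul_mem_pow_mul_of_chain g m hstep)
  calc (wordDist K s t : ℝ) ≤ m * N := by exact_mod_cast hword
    _ ≤ (dist (act s x) (act t x) + c + 1) * N := by gcongr
    _ = N * (dist (act s x) (act t x) + c + 1) := mul_comm _ _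

end

theorem svarc_milnor_orbit_map_quasi_isometry_general
    {G X : Type*} [Group G] [TopologicalSpace G] [IsTopologicalGroup G]
    [PseudoMetricSpace X]
    (C r c : ℝ) (hC : 1 ≤ C)
    (hgeo : IsCoarselyGeodesic X c)
    (act : G → X → X)
    (hqa : IsQuasiAction C r act)
    (hproper : IsProperQA act)
    (hcob : IsCoboundedQA r act)
    (K : Set G) (hKcomp : IsCompact K) (hKnhds : K ∈ nhds (1 : G))
    (hKgen : ∀ g : G, ∃ n : ℕ, g ∈ K ^ n) :
    ∀ x : X, ∃ C' r' : ℝ, 1 ≤ C' ∧ 0 ≤ r' ∧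
      (∀ s t : G,
        C'⁻¹ * (wordDist K s t : ℝ) - r' ≤ dist (act s x) (act t x) ∧
        dist (act s x) (act t x) ≤ C' * (wordDist K s t : ℝ) + r') ∧
      (∀ y : X, ∃ s : G, dist (act s x) y ≤ r') := by
  intro x
  have hC0 : 0 < C := by linarith
  have hr := hqa.r_nonneg x
  have hc := hgeo.nonneg x
  obtain ⟨B, hB⟩ := (hqa.2.2.2 K hKcomp x).subset_closedBall x
  obtain ⟨N, hN⟩ := Set.exists_subset_pow_of_isCompact hKnhds hKgen
    (hproper (C * (4 * r + 1 + c)) (by positivity) x)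
  set C' := max (max (C * B + 2 * r) N) 1
  have hC'pos : 0 < C' := zero_lt_one.trans_le (le_max_right _ _)
  refine ⟨C', max (c + 1) r, le_max_right _ _, hr.trans (le_max_right _ _),
    fun s t => ⟨?_, ?_⟩, fun y => (hcob x y).imp fun _ hs => hs.trans (le_max_right _ _)⟩
  · have hword := wordDist_le_of_subset_pow hqa hC0 hgeo hcob (subset_closure.trans hN) s t
    have : C'⁻¹ * wordDist K s t ≤ dist (act s x) (act t x) + c + 1 := by
      rw [inv_mul_le_iff₀ hC'pos]
      exact hword.trans (by gcongr; exact le_max_right _ _ |>.trans (le_max_left _ _))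
    linarith [le_max_left (c + 1) r]
  · have hdist := hqa.dist_le_of_inv_mul_mem_pow hC0.le (fun k hk => hB ⟨k, hk, rfl⟩) _ s t
      (inv_mul_mem_pow_wordDist hKgen s t)
    calc dist (act s x) (act t x) ≤ wordDist K s t * (C * B + 2 * r) := hdist
      _ ≤ C' * wordDist K s t + max (c + 1) r := by
        rw [mul_comm]
        exact le_add_of_le_of_nonneg (by gcongr; exact le_max_left _ _ |>.trans (le_max_left _ _))
          (by positivity)

/-- for a proper cobounded quasi-action on a coarsely geodesic space,
every orbit map is a quasi-isometry with respect to the word-length metric coming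
from a compact symmetric generating neighbourhood of the identity. -/
theorem svarc_milnor_orbit_map_quasi_isometry
    {G X : Type*} [Group G] [TopologicalSpace G] [IsTopologicalGroup G]
    [LocallyCompactSpace G] [PseudoMetricSpace X]
    (C r c : ℝ) (hC : 1 ≤ C) (hr : 0 ≤ r) (hc : 0 ≤ c)
    (hgeo : IsCoarselyGeodesic X c)
    (act : G → X → X)
    (hqa : IsQuasiAction C r act)
    (hproper : IsProperQA act)
    (hcob : IsCoboundedQA r act)
    (K : Set G) (hKcomp : IsCompact K) (hKnhds : K ∈ nhds (1 : G)) (hKsymm : K⁻¹ = K)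
    (hKgen : ∀ g : G, ∃ n : ℕ, g ∈ K ^ n) :
    ∀ x : X, ∃ C' r' : ℝ, 1 ≤ C' ∧ 0 ≤ r' ∧
      (∀ s t : G,
        C'⁻¹ * (wordDist K s t : ℝ) - r' ≤ dist (act s x) (act t x) ∧
        dist (act s x) (act t x) ≤ C' * (wordDist K s t : ℝ) + r') ∧
      (∀ y : X, ∃ s : G, dist (act s x) y ≤ r') :=
  svarc_milnor_orbit_map_quasi_isometry_general C r c hC hgeo act hqa hproper hcob K hKcomp hKnhds
    hKgen
end

section
/- Let G be a compactly generated locally compact group and H a closed cocompact subgroup of G. Then H is compactly generated, and the inclusion H → G is a quasi-isometry with respect to word-length metrics. -/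
open Pointwise

/-!
Since `K` is a neighbourhood of `1`, the open sets `interior (K ^ n)` increase and exhaust `G`,
so compactness of `G ⧸ H` gives `N` with `G = H * K ^ N`. Writing an element of `K ^ n` as
`h * m` with `m ∈ K ^ N` and adding one letter of `K` at a time, each step multiplies `h` by an
element of the compact symmetric set `L = H ∩ K ^ (2N + 1)`. Hence every element of `H ∩ K ^ n`
lies in `L ^ (n + 1)`, while `L ^ n ⊆ K ^ ((2N + 1) n)`: the two word metrics on `H` are
bi-Lipschitz up to an additive constant, and `H` is `N`-dense in `G`.
-/

open Set Topology

section WordDist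

variable {G : Type*} [Group G] {K L : Set G} {s t : G}

lemma wordDist_le_of_mem {n : ℕ} (h : s⁻¹ * t ∈ K ^ n) : wordDist K s t ≤ n :=
  Nat.sInf_le h

lemma mem_pow_wordDist (h : ∃ n : ℕ, s⁻¹ * t ∈ K ^ n) : s⁻¹ * t ∈ K ^ wordDist K s t :=
  Nat.sInf_mem h

lemma wordDist_le_mul_wordDist_of_subset_pow {c : ℕ} (hLK : L ⊆ K ^ c)
    (h : ∃ n : ℕ, s⁻¹ * t ∈ L ^ n) : wordDist K s t ≤ c * wordDist L s t :=
  wordDist_le_of_mem <| by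
    rw [pow_mul]
    exact pow_subset_pow_left hLK (mem_pow_wordDist h)

end WordDist

lemma IsCompact.pow {M : Type*} [Monoid M] [TopologicalSpace M] [ContinuousMul M] {K : Set M}
    (hK : IsCompact K) : ∀ n : ℕ, IsCompact (K ^ n)
  | 0 => by rw [pow_zero]; exact isCompact_singleton
  | n + 1 => by simpa only [pow_succ] using (hK.pow n).mul hK

lemma monotone_interior_pow {M : Type*} [Monoid M] [TopologicalSpace M] {K : Set M}
    (hK : K ∈ 𝓝 1) : Monotone fun n : ℕ => interior (K ^ n) :=
  fun _ _ hmn => interior_mono (pow_subset_pow_right (mem_of_mem_nhds hK) hmn)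

section CompactGeneration

variable {G : Type*} [Group G] [TopologicalSpace G] [IsTopologicalGroup G] {K : Set G}

lemma iUnion_interior_pow_eq_univ (hK : K ∈ 𝓝 1) (hKgen : ∀ g : G, ∃ n : ℕ, g ∈ K ^ n) :
    ⋃ n : ℕ, interior (K ^ n) = univ := by
  refine eq_univ_of_forall fun g => ?_
  obtain ⟨n, hn⟩ := hKgen g
  have hsub : K ^ n * interior K ⊆ interior (K ^ (n + 1)) :=
    interior_maximal (pow_succ K n ▸ mul_subset_mul_left interior_subset)
      isOpen_interior.mul_left
  exact mem_iUnion.2 ⟨n + 1, hsub (mul_one g ▸ mul_mem_mul hn (mem_interior_iff_mem_nhds.2 hK))⟩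

lemma exists_forall_exists_inv_mul_mem_pow (H : Subgroup G) [CompactSpace (G ⧸ H)]
    (hK : K ∈ 𝓝 1) (hKsymm : K⁻¹ = K) (hKgen : ∀ g : G, ∃ n : ℕ, g ∈ K ^ n) :
    ∃ n : ℕ, ∀ g : G, ∃ h ∈ H, h⁻¹ * g ∈ K ^ n := by
  have hcover : univ ⊆ ⋃ n : ℕ, ((↑) : G → G ⧸ H) '' interior (K ^ n) := by
    rw [← image_iUnion, iUnion_interior_pow_eq_univ hK hKgen, image_univ_of_surjective
      QuotientGroup.mk_surjective]
  have hmono : Monotone fun n : ℕ => ((↑) : G → G ⧸ H) '' interior (K ^ n) :=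
    fun _ _ hmn => image_mono (monotone_interior_pow hK hmn)
  obtain ⟨n, hn⟩ := isCompact_univ.elim_directed_cover _
    (fun _ => QuotientGroup.isOpenMap_coe _ isOpen_interior) hcover hmono.directed_le
  refine ⟨n, fun g => ?_⟩
  obtain ⟨u, hu, hug⟩ := hn (mem_univ ((g⁻¹ : G) : G ⧸ H))
  refine ⟨g * u, by simpa using inv_mem (QuotientGroup.eq.1 hug), ?_⟩
  have hsymm : (K ^ n)⁻¹ = K ^ n := by rw [← inv_pow, hKsymm]
  simpa using hsymm ▸ inv_mem_inv.2 (interior_subset hu)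

end CompactGeneration

section CosetRepresentatives

variable {G : Type*} [Group G] {K : Set G} (H : Subgroup G) {N : ℕ}

lemma exists_mem_pow_inv_mul_mem_pow (h1 : 1 ∈ K) (hKsymm : K⁻¹ = K)
    (hN : ∀ g : G, ∃ h ∈ H, h⁻¹ * g ∈ K ^ N) :
    ∀ n : ℕ, ∀ g ∈ K ^ n, ∃ h ∈ ((H : Set G) ∩ K ^ (2 * N + 1)) ^ n, h⁻¹ * g ∈ K ^ N
  | 0, g, hg => by
    rw [pow_zero, Set.mem_one] at hg
    exact ⟨1, by rw [pow_zero]; rfl, by simpa [hg] using one_mem_pow h1⟩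
  | n + 1, _, ⟨g, hg, k, hk, rfl⟩ => by
    obtain ⟨h, hh, hm⟩ := exists_mem_pow_inv_mul_mem_pow h1 hKsymm hN n g hg
    obtain ⟨h₂, hh₂H, hm₂⟩ := hN (h⁻¹ * g * k)
    have hh₂K : h₂ ∈ K ^ (2 * N + 1) := by
      have hsymm : (K ^ N)⁻¹ = K ^ N := by rw [← inv_pow, hKsymm]
      have : h₂ = h⁻¹ * g * k * (h₂⁻¹ * (h⁻¹ * g * k))⁻¹ := by group
      rw [this, show 2 * N + 1 = N + 1 + N by ring, pow_add, pow_succ]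
      exact mul_mem_mul (mul_mem_mul hm hk) (hsymm ▸ inv_mem_inv.2 hm₂)
    refine ⟨h * h₂, by rw [pow_succ]; exact mul_mem_mul hh ⟨hh₂H, hh₂K⟩, ?_⟩
    simpa [mul_assoc] using hm₂

lemma mem_inter_pow_succ_of_mem_pow (h1 : 1 ∈ K) (hKsymm : K⁻¹ = K)
    (hN : ∀ g : G, ∃ h ∈ H, h⁻¹ * g ∈ K ^ N) {n : ℕ} {x : G} (hxH : x ∈ H) (hxK : x ∈ K ^ n) :
    x ∈ ((H : Set G) ∩ K ^ (2 * N + 1)) ^ (n + 1) := by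
  obtain ⟨h, hh, hm⟩ := exists_mem_pow_inv_mul_mem_pow H h1 hKsymm hN n x hxK
  have hhH : h ∈ H := Subgroup.pow_subset inter_subset_left hh
  have hmL : h⁻¹ * x ∈ (H : Set G) ∩ K ^ (2 * N + 1) :=
    ⟨H.mul_mem (H.inv_mem hhH) hxH, pow_subset_pow_right h1 (by omega) hm⟩
  rw [pow_succ]
  simpa using mul_mem_mul hh hmL

lemma wordDist_inter_pow_le_wordDist_add_one (h1 : 1 ∈ K) (hKsymm : K⁻¹ = K)
    (hN : ∀ g : G, ∃ h ∈ H, h⁻¹ * g ∈ K ^ N) (hKgen : ∀ g : G, ∃ n : ℕ, g ∈ K ^ n) {s t : G}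
    (hs : s ∈ H) (ht : t ∈ H) :
    wordDist ((H : Set G) ∩ K ^ (2 * N + 1)) s t ≤ wordDist K s t + 1 :=
  wordDist_le_of_mem <| mem_inter_pow_succ_of_mem_pow H h1 hKsymm hN
    (H.mul_mem (H.inv_mem hs) ht) (mem_pow_wordDist (hKgen _))

end CosetRepresentatives

theorem cocompact_subgroup_compactly_generated_and_qi_general
    {G : Type*} [Group G] [TopologicalSpace G] [IsTopologicalGroup G]
    (K : Set G) (hKcomp : IsCompact K) (hKnhds : K ∈ nhds (1 : G)) (hKsymm : K⁻¹ = K)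
    (hKgen : ∀ g : G, ∃ n : ℕ, g ∈ K ^ n)
    (H : Subgroup G) (hHclosed : IsClosed (H : Set G)) (hHcc : CompactSpace (G ⧸ H)) :
    ∃ L : Set G, L ⊆ (H : Set G) ∧ IsCompact L ∧ L⁻¹ = L ∧
      (∃ U : Set G, IsOpen U ∧ (1 : G) ∈ U ∧ U ∩ (H : Set G) ⊆ L) ∧
      (∀ h ∈ (H : Set G), ∃ n : ℕ, h ∈ L ^ n) ∧
      ∃ C r : ℝ, 1 ≤ C ∧ 0 ≤ r ∧
        (∀ h ∈ (H : Set G), ∀ h' ∈ (H : Set G),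
          C⁻¹ * (wordDist L h h' : ℝ) - r ≤ (wordDist K h h' : ℝ) ∧
          (wordDist K h h' : ℝ) ≤ C * (wordDist L h h' : ℝ) + r) ∧
        (∀ g : G, ∃ h ∈ (H : Set G), (wordDist K h g : ℝ) ≤ r) := by
  have h1 : (1 : G) ∈ K := mem_of_mem_nhds hKnhds
  obtain ⟨N, hN⟩ := exists_forall_exists_inv_mul_mem_pow H hKnhds hKsymm hKgen
  set L : Set G := (H : Set G) ∩ K ^ (2 * N + 1)
  have hKsubL : K ⊆ K ^ (2 * N + 1) := by
    simpa using pow_subset_pow_right h1 (by omega : 1 ≤ 2 * N + 1)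
  have hLgen : ∀ h ∈ (H : Set G), ∃ n : ℕ, h ∈ L ^ n := fun h hh =>
    let ⟨n, hn⟩ := hKgen h; ⟨n + 1, mem_inter_pow_succ_of_mem_pow H h1 hKsymm hN hh hn⟩
  refine ⟨L, inter_subset_left, (hKcomp.pow _).inter_left hHclosed,
    by rw [inter_inv, inv_coe_set, ← inv_pow, hKsymm],
    ⟨interior K, isOpen_interior, mem_interior_iff_mem_nhds.2 hKnhds,
      fun x hx => ⟨hx.2, hKsubL (interior_subset hx.1)⟩⟩,
    hLgen, 2 * N + 1, N + 1, by linarith [N.cast_nonneg (α := ℝ)], by positivity,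
    fun h hh h' hh' => ?_, fun g => ?_⟩
  · have hH : h⁻¹ * h' ∈ H := H.mul_mem (H.inv_mem hh) hh'
    have hLK : wordDist L h h' ≤ wordDist K h h' + 1 :=
      wordDist_inter_pow_le_wordDist_add_one H h1 hKsymm hN hKgen hh hh'
    have hKL : wordDist K h h' ≤ (2 * N + 1) * wordDist L h h' :=
      wordDist_le_mul_wordDist_of_subset_pow inter_subset_right (hLgen _ hH)
    constructor
    · rw [sub_le_iff_le_add, inv_mul_le_iff₀ (by positivity)]
      have : (wordDist L h h' : ℝ) ≤ wordDist K h h' + 1 := by exact_mod_cast hLK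
      nlinarith [N.cast_nonneg (α := ℝ), (wordDist K h h').cast_nonneg (α := ℝ)]
    · have : (wordDist K h h' : ℝ) ≤ (2 * N + 1) * wordDist L h h' := by exact_mod_cast hKL
      linarith
  · obtain ⟨h, hh, hm⟩ := hN g
    exact ⟨h, hh, by exact_mod_cast (wordDist_le_of_mem hm).trans N.le_succ⟩

/-- a closed cocompact subgroup `H` of a compactly generated locally
compact group `G` is compactly generated, and the inclusion `H → G` is a
quasi-isometry with respect to word-length metrics. -/
theorem cocompact_subgroup_compactly_generated_and_qi
    {G : Type*} [Group G] [TopologicalSpace G] [IsTopologicalGroup G] [LocallyCompactSpace G]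
    (K : Set G) (hKcomp : IsCompact K) (hKnhds : K ∈ nhds (1 : G)) (hKsymm : K⁻¹ = K)
    (hKgen : ∀ g : G, ∃ n : ℕ, g ∈ K ^ n)
    (H : Subgroup G) (hHclosed : IsClosed (H : Set G)) (hHcc : CompactSpace (G ⧸ H)) :
    ∃ L : Set G, L ⊆ (H : Set G) ∧ IsCompact L ∧ L⁻¹ = L ∧
      (∃ U : Set G, IsOpen U ∧ (1 : G) ∈ U ∧ U ∩ (H : Set G) ⊆ L) ∧
      (∀ h ∈ (H : Set G), ∃ n : ℕ, h ∈ L ^ n) ∧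
      ∃ C r : ℝ, 1 ≤ C ∧ 0 ≤ r ∧
        (∀ h ∈ (H : Set G), ∀ h' ∈ (H : Set G),
          C⁻¹ * (wordDist L h h' : ℝ) - r ≤ (wordDist K h h' : ℝ) ∧
          (wordDist K h h' : ℝ) ≤ C * (wordDist L h h' : ℝ) + r) ∧
        (∀ g : G, ∃ h ∈ (H : Set G), (wordDist K h g : ℝ) ≤ r) :=
  cocompact_subgroup_compactly_generated_and_qi_general K hKcomp hKnhds hKsymm hKgen H hHclosed hHcc
end

section
/- In the hyperbolic plane H² = {(u,a) ∈ ℝ² : a > 0} with the hyperbolic metric, the set X = {(eⁿm, eⁿ) : n, m ∈ ℤ} is coarsely dense: every point of H² is within hyperbolic distance 2·tanh⁻¹(√((1/4 + (e^{1/2}−1)²)/(1/4 + (e^{−1/2}+1)²))) of X. -/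
/-- The hyperbolic metric on the upper half-plane, viewed inside `ℂ`:
`d(x,y) = log((|x−ȳ|+|x−y|)/(|x−ȳ|−|x−y|))`. -/
noncomputable def hypDist (x y : ℂ) : ℝ :=
  Real.log ((‖x - (starRingEnd ℂ) y‖ + ‖x - y‖) /
            (‖x - (starRingEnd ℂ) y‖ - ‖x - y‖))

/-- The point `(eⁿ m, eⁿ)` of the upper half-plane. -/
noncomputable def latticePt (n m : ℤ) : ℂ :=
  (Real.exp n * m : ℝ) + (Real.exp n : ℝ) * Complex.I

/-!
Scaling by `eⁿ > 0` and translating by reals are isometries of `hypDist`, and they carry the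
lattice point `(eⁿm, eⁿ)` to `i`. Taking `n` nearest to `log (Im y)` and `m` nearest to
`Re y / eⁿ` moves `y` into the box `|Re z| ≤ 1/2`, `e^{-1/2} ≤ Im z ≤ e^{1/2}`. There
`‖i - z‖² / ‖i - z̄‖² = ((Re z)² + (1 - Im z)²) / ((Re z)² + (1 + Im z)²)` is increasing in
`(Re z)²`, so it is at most its value at `(Re z)² = 1/4`, which is bounded by maximizing the
numerator and minimizing the denominator separately over the box. Finally `hypDist i z` is the
increasing function `t ↦ log ((1 + t) / (1 - t))` of `t = ‖i - z‖ / ‖i - z̄‖`.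
-/

open Complex ComplexConjugate

theorem hypDist_eq_log {x y : ℂ} (h : ‖x - conj y‖ ≠ 0) :
    hypDist x y = Real.log ((1 + ‖x - y‖ / ‖x - conj y‖) / (1 - ‖x - y‖ / ‖x - conj y‖)) := by
  unfold hypDist
  congr 1
  field_simp

theorem hypDist_ofReal_mul {c : ℝ} (hc : 0 < c) (x y : ℂ) :
    hypDist (c * x) (c * y) = hypDist x y := by
  have hnorm : ∀ w : ℂ, ‖(c : ℂ) * w‖ = c * ‖w‖ := fun w => by
    rw [norm_mul, Complex.norm_of_nonneg hc.le]
  simp only [hypDist, map_mul, conj_ofReal, ← mul_sub, hnorm, ← mul_add,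
    mul_div_mul_left _ _ hc.ne']

theorem hypDist_add_ofReal (x y : ℂ) (r : ℝ) : hypDist (x + r) (y + r) = hypDist x y := by
  simp only [hypDist, map_add, conj_ofReal, add_sub_add_right_eq_sub]

theorem hypDist_le_of_sq_le {x y : ℂ} {R : ℝ} (hxy : ‖x - conj y‖ ≠ 0) (hR : R < 1)
    (h : (‖x - y‖ / ‖x - conj y‖) ^ 2 ≤ R) :
    hypDist x y ≤ Real.log ((1 + √R) / (1 - √R)) := by
  set ρ := ‖x - y‖ / ‖x - conj y‖
  have hρ : 0 ≤ ρ := by positivity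
  have hρR : ρ ≤ √R := abs_of_nonneg hρ ▸ Real.abs_le_sqrt h
  have hR1 : √R < 1 := (Real.sqrt_lt' one_pos).2 (by rwa [one_pow])
  rw [hypDist_eq_log hxy]
  apply Real.log_le_log (div_pos (by linarith) (by linarith))
  exact Real.strictMonoOn_one_add_div_one_sub.monotoneOn ⟨by linarith, by linarith⟩
    ⟨by linarith, hR1⟩ hρR

theorem add_div_add_le_add_div_add {k l p q : ℝ} (hkl : k ≤ l) (hpq : p ≤ q) (hkq : 0 < k + q) :
    (k + p) / (k + q) ≤ (l + p) / (l + q) := by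
  rw [div_le_div_iff₀ hkq (by linarith)]
  nlinarith [mul_nonneg (sub_nonneg.2 hkl) (sub_nonneg.2 hpq)]

theorem sq_one_sub_le_sq_exp_sub_one {c t : ℝ} (hlo : Real.exp (-c) ≤ t) (hhi : t ≤ Real.exp c) :
    (1 - t) ^ 2 ≤ (Real.exp c - 1) ^ 2 := by
  have hsum : 2 ≤ Real.exp c + Real.exp (-c) := by
    linarith [Real.add_one_le_exp c, Real.add_one_le_exp (-c)]
  exact sq_le_sq' (by linarith) (by linarith)

theorem sq_norm_I_sub (z : ℂ) : ‖I - z‖ ^ 2 = z.re ^ 2 + (1 - z.im) ^ 2 := by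
  rw [Complex.sq_norm, Complex.normSq_apply]
  simp only [sub_re, sub_im, I_re, I_im]
  ring

theorem sq_norm_I_sub_conj (z : ℂ) : ‖I - conj z‖ ^ 2 = z.re ^ 2 + (1 + z.im) ^ 2 := by
  rw [Complex.sq_norm, Complex.normSq_apply]
  simp only [sub_re, sub_im, I_re, I_im, conj_re, conj_im]
  ring

theorem sq_norm_I_sub_div_le {h c : ℝ} {z : ℂ} (hre : |z.re| ≤ h)
    (hlo : Real.exp (-c) ≤ z.im) (hhi : z.im ≤ Real.exp c) :
    (‖I - z‖ / ‖I - conj z‖) ^ 2 ≤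
      (h ^ 2 + (Real.exp c - 1) ^ 2) / (h ^ 2 + (Real.exp (-c) + 1) ^ 2) := by
  have him : 0 < z.im := (Real.exp_pos _).trans_le hlo
  rw [div_pow, sq_norm_I_sub, sq_norm_I_sub_conj]
  calc (z.re ^ 2 + (1 - z.im) ^ 2) / (z.re ^ 2 + (1 + z.im) ^ 2)
      ≤ (h ^ 2 + (1 - z.im) ^ 2) / (h ^ 2 + (1 + z.im) ^ 2) :=
        add_div_add_le_add_div_add (sq_le_sq' (abs_le.1 hre).1 (abs_le.1 hre).2)
          (by nlinarith) (by positivity)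
    _ ≤ (h ^ 2 + (Real.exp c - 1) ^ 2) / (h ^ 2 + (Real.exp (-c) + 1) ^ 2) := by
        gcongr (h ^ 2 + ?_) / (h ^ 2 + ?_)
        · exact sq_one_sub_le_sq_exp_sub_one hlo hhi
        · exact pow_le_pow_left₀ (by positivity) (by linarith) 2

theorem hypDist_I_le {h c : ℝ} (hc : Real.sinh c < 1) {z : ℂ} (hre : |z.re| ≤ h)
    (hlo : Real.exp (-c) ≤ z.im) (hhi : z.im ≤ Real.exp c) :
    hypDist I z ≤
      Real.log ((1 + √((h ^ 2 + (Real.exp c - 1) ^ 2) / (h ^ 2 + (Real.exp (-c) + 1) ^ 2))) /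
                (1 - √((h ^ 2 + (Real.exp c - 1) ^ 2) / (h ^ 2 + (Real.exp (-c) + 1) ^ 2)))) := by
  have him : 0 < z.im := (Real.exp_pos _).trans_le hlo
  refine hypDist_le_of_sq_le ?_ ?_ (sq_norm_I_sub_div_le hre hlo hhi)
  · intro h0
    have hsq := sq_norm_I_sub_conj z
    rw [h0] at hsq
    nlinarith [sq_nonneg z.re]
  · rw [div_lt_one (by positivity)]
    have hsub : Real.exp c - 1 < Real.exp (-c) + 1 := by
      rw [Real.sinh_eq] at hc
      linarith
    have hsq : (Real.exp c - 1) ^ 2 < (Real.exp (-c) + 1) ^ 2 :=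
      sq_lt_sq' (by linarith [Real.exp_pos c, Real.exp_pos (-c)]) hsub
    linarith

theorem sinh_half_lt_one : Real.sinh (1 / 2) < 1 := by
  have h : Real.exp (1 / 2) < 2 := by
    refine (Real.exp_bound_div_one_sub_of_interval' (by norm_num) (by norm_num)).trans_eq ?_
    norm_num
  rw [Real.sinh_eq]
  linarith [Real.exp_pos (-(1 / 2))]

theorem latticePt_eq (n m : ℤ) : latticePt n m = (Real.exp n : ℂ) * (I + (m : ℝ)) := by
  unfold latticePt
  push_cast
  ring

theorem exists_eq_exp_mul_add_of_im_pos {y : ℂ} (hy : 0 < y.im) :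
    ∃ n m : ℤ, ∃ z : ℂ, y = (Real.exp n : ℂ) * (z + (m : ℝ)) ∧ |z.re| ≤ 1 / 2 ∧
      Real.exp (-(1 / 2)) ≤ z.im ∧ z.im ≤ Real.exp (1 / 2) := by
  set n := round (Real.log y.im)
  set E := Real.exp n
  set m := round (y.re / E)
  have hE : (E : ℂ) ≠ 0 := Complex.ofReal_ne_zero.2 (Real.exp_pos _).ne'
  have him : y.im / E = Real.exp (Real.log y.im - n) := by
    rw [Real.exp_sub, Real.exp_log hy]
  have hlog := abs_le.1 (abs_sub_round (Real.log y.im))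
  refine ⟨n, m, y / E - (m : ℝ), by field_simp; ring, ?_, ?_, ?_⟩
  · simpa [Complex.div_ofReal_re] using abs_sub_round (y.re / E)
  · simpa [Complex.div_ofReal_im, him] using hlog.1
  · simpa [Complex.div_ofReal_im, him] using hlog.2

/-- the set `X = {(eⁿm, eⁿ) : n, m ∈ ℤ}` is coarsely dense in the
hyperbolic plane: every point is within hyperbolic distance
`2 tanh⁻¹ √((1/4 + (e^{1/2}−1)²)/(1/4 + (e^{−1/2}+1)²))` of `X`
(here `2 tanh⁻¹ t = log((1+t)/(1−t))`). -/
theorem lattice_coarsely_dense_in_hyperbolic_plane :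
    ∀ y : ℂ, 0 < y.im → ∃ n m : ℤ,
      hypDist (latticePt n m) y ≤
        Real.log ((1 + Real.sqrt ((1/4 + (Real.exp (1/2) - 1)^2) /
                                  (1/4 + (Real.exp (-(1/2)) + 1)^2))) /
                  (1 - Real.sqrt ((1/4 + (Real.exp (1/2) - 1)^2) /
                                  (1/4 + (Real.exp (-(1/2)) + 1)^2)))) := by
  intro y hy
  obtain ⟨n, m, z, rfl, hre, hlo, hhi⟩ := exists_eq_exp_mul_add_of_im_pos hy
  refine ⟨n, m, ?_⟩
  rw [latticePt_eq, hypDist_ofReal_mul (Real.exp_pos _), hypDist_add_ofReal]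
  have hquarter : ((1 : ℝ) / 2) ^ 2 = 1 / 4 := by norm_num
  simpa only [hquarter] using hypDist_I_le sinh_half_lt_one hre hlo hhi
end

section
/- In the hyperbolic plane H² with metric d(x,y) = log((|x−ȳ|+|x−y|)/(|x−ȳ|−|x−y|)), if x = (eⁿm, eⁿ) with n, m ∈ ℤ and y = (u,a) with a > 0 satisfy d(x,y) ≤ R, then |n − log a| ≤ R and |m − e^{−k}a⁻¹u| ≤ √(2(e^{2R} − 1)) where k = n − log a. Consequently, for every R > 0 there is a uniform bound M, independent of y, on the number of points x ∈ X = {(eⁿm, eⁿ) : n,m ∈ ℤ} with d(x,y) ≤ R; i.e., X is a quasi-lattice in H². -/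
open Real ComplexConjugate

section HyperbolicDistance

variable {x y : ℂ} {R : ℝ}

lemma Complex.norm_sub_conj_sq (x y : ℂ) :
    ‖x - conj y‖ ^ 2 = ‖x - y‖ ^ 2 + 4 * x.im * y.im := by
  simp only [Complex.sq_norm, Complex.normSq_apply, Complex.sub_re, Complex.sub_im,
    Complex.conj_re, Complex.conj_im]
  ring

lemma Complex.norm_sub_lt_norm_sub_conj (hx : 0 < x.im) (hy : 0 < y.im) :
    ‖x - y‖ < ‖x - conj y‖ := by
  have := Complex.norm_sub_conj_sq x y
  exact lt_of_pow_lt_pow_left₀ 2 (norm_nonneg _) (by nlinarith [mul_pos hx hy])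

lemma hypDist_nonneg (hx : 0 < x.im) (hy : 0 < y.im) : 0 ≤ hypDist x y := by
  have hlt := Complex.norm_sub_lt_norm_sub_conj hx hy
  refine Real.log_nonneg ((one_le_div (by linarith)).2 ?_)
  linarith [norm_nonneg (x - y)]

lemma cosh_hypDist (hx : 0 < x.im) (hy : 0 < y.im) :
    cosh (hypDist x y) = 1 + ‖x - y‖ ^ 2 / (2 * x.im * y.im) := by
  have hlt := Complex.norm_sub_lt_norm_sub_conj hx hy
  have hsq := Complex.norm_sub_conj_sq x y
  rw [hypDist]
  set p := ‖x - conj y‖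
  set q := ‖x - y‖
  have hq : 0 ≤ q := norm_nonneg _
  rw [cosh_log (div_pos (by linarith) (by linarith)), inv_div]
  field_simp
  rw [div_eq_iff (by nlinarith)]
  linear_combination (-q ^ 2) * hsq

lemma norm_sub_sq_le_of_hypDist_le (hx : 0 < x.im) (hy : 0 < y.im) (h : hypDist x y ≤ R) :
    ‖x - y‖ ^ 2 ≤ 2 * x.im * y.im * (cosh R - 1) := by
  have hd := hypDist_nonneg hx hy
  have hcosh : cosh (hypDist x y) ≤ cosh R :=
    cosh_le_cosh.2 (by rw [abs_of_nonneg hd, abs_of_nonneg (hd.trans h)]; exact h)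
  rw [cosh_hypDist hx hy, ← le_sub_iff_add_le', div_le_iff₀ (by positivity)] at hcosh
  linarith

lemma abs_log_im_sub_log_im_le_of_hypDist_le (hx : 0 < x.im) (hy : 0 < y.im)
    (h : hypDist x y ≤ R) :
    |log x.im - log y.im| ≤ R := by
  have hR : 0 ≤ R := (hypDist_nonneg hx hy).trans h
  have him : (x.im - y.im) ^ 2 ≤ 2 * x.im * y.im * (cosh R - 1) := by
    calc (x.im - y.im) ^ 2 = (x - y).im * (x - y).im := by rw [Complex.sub_im, sq]
      _ ≤ ‖x - y‖ ^ 2 := by rw [Complex.sq_norm]; exact Complex.im_sq_le_normSq _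
      _ ≤ _ := norm_sub_sq_le_of_hypDist_le hx hy h
  have hcosh : cosh (log x.im - log y.im) ≤ cosh R := by
    rw [← log_div hx.ne' hy.ne', cosh_log (by positivity), inv_div, div_add_div _ _ hy.ne' hx.ne',
      div_div, div_le_iff₀ (by positivity)]
    nlinarith
  simpa [abs_of_nonneg hR] using cosh_le_cosh.1 hcosh

lemma abs_re_sub_re_div_im_le_of_hypDist_le (hx : 0 < x.im) (hy : 0 < y.im)
    (h : hypDist x y ≤ R) :
    |(x.re - y.re) / x.im| ≤ sqrt (2 * (exp (2 * R) - 1)) := by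
  have hR : 0 ≤ R := (hypDist_nonneg hx hy).trans h
  have hratio : y.im / x.im ≤ exp R := by
    rw [← exp_log (div_pos hy hx), log_div hy.ne' hx.ne', exp_le_exp]
    linarith [neg_abs_le (log x.im - log y.im), abs_log_im_sub_log_im_le_of_hypDist_le hx hy h]
  have hre : (x.re - y.re) ^ 2 ≤ 2 * x.im * y.im * (cosh R - 1) := by
    calc (x.re - y.re) ^ 2 = (x - y).re * (x - y).re := by rw [Complex.sub_re, sq]
      _ ≤ ‖x - y‖ ^ 2 := by rw [Complex.sq_norm]; exact Complex.re_sq_le_normSq _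
      _ ≤ _ := norm_sub_sq_le_of_hypDist_le hx hy h
  refine abs_le_sqrt ?_
  calc ((x.re - y.re) / x.im) ^ 2 ≤ 2 * (y.im / x.im) * (cosh R - 1) := by
        rw [div_pow, div_le_iff₀ (by positivity)]
        refine hre.trans_eq ?_
        field_simp
    _ ≤ 2 * exp R * (cosh R - 1) := by
        gcongr
        linarith [one_le_cosh R]
    _ ≤ 2 * (exp (2 * R) - 1) := by
        rw [cosh_eq, exp_neg, mul_comm 2 R, exp_mul, Real.rpow_two]
        have := one_le_exp hR
        field_simp
        nlinarith

end HyperbolicDistance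

open Finset in
lemma Int.mem_Icc_ceil_floor_iff {m : ℤ} {c B : ℝ} :
    m ∈ Icc ⌈c - B⌉ ⌊c + B⌋ ↔ |(m : ℝ) - c| ≤ B := by
  rw [mem_Icc, Int.ceil_le, Int.le_floor, abs_le]
  constructor <;> rintro ⟨h₁, h₂⟩ <;> constructor <;> linarith

open Finset in
lemma Int.card_Icc_ceil_floor_le (c B : ℝ) :
    #(Icc ⌈c - B⌉ ⌊c + B⌋) ≤ ⌈2 * B⌉₊ + 1 := by
  rw [Int.card_Icc, Int.toNat_le]
  have : ((⌊c + B⌋ + 1 - ⌈c - B⌉ : ℤ) : ℝ) ≤ ((⌈2 * B⌉₊ + 1 : ℕ) : ℝ) := by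
    push_cast
    linarith [Int.floor_le (c + B), Int.le_ceil (c - B), Nat.le_ceil (2 * B)]
  exact_mod_cast this

section IntTube

open Finset

variable {c A B : ℝ} {f : ℤ → ℝ}

noncomputable def intTube (c A B : ℝ) (f : ℤ → ℝ) : Finset (ℤ × ℤ) :=
  (Icc ⌈c - A⌉ ⌊c + A⌋).biUnion fun n => (Icc ⌈f n - B⌉ ⌊f n + B⌋).image (Prod.mk n)

lemma mem_intTube {p : ℤ × ℤ} :
    p ∈ intTube c A B f ↔ |(p.1 : ℝ) - c| ≤ A ∧ |(p.2 : ℝ) - f p.1| ≤ B := by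
  obtain ⟨n, m⟩ := p
  rw [← Int.mem_Icc_ceil_floor_iff, ← Int.mem_Icc_ceil_floor_iff]
  simp only [intTube, mem_biUnion, mem_image, Prod.mk.injEq]
  constructor
  · rintro ⟨n, hn, m, hm, rfl, rfl⟩
    exact ⟨hn, hm⟩
  · rintro ⟨hn, hm⟩
    exact ⟨n, hn, m, hm, rfl, rfl⟩

lemma card_intTube_le : #(intTube c A B f) ≤ (⌈2 * A⌉₊ + 1) * (⌈2 * B⌉₊ + 1) :=
  calc #(intTube c A B f)
      ≤ ∑ n ∈ Icc ⌈c - A⌉ ⌊c + A⌋, #((Icc ⌈f n - B⌉ ⌊f n + B⌋).image (Prod.mk n)) :=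
        card_biUnion_le
    _ ≤ #(Icc ⌈c - A⌉ ⌊c + A⌋) * (⌈2 * B⌉₊ + 1) :=
        sum_le_card_nsmul _ _ _ fun _ _ => card_image_le.trans (Int.card_Icc_ceil_floor_le _ _)
    _ ≤ (⌈2 * A⌉₊ + 1) * (⌈2 * B⌉₊ + 1) :=
        Nat.mul_le_mul_right _ (Int.card_Icc_ceil_floor_le c A)

end IntTube

section Lattice

variable {n m : ℤ} {y : ℂ} {R : ℝ}

@[simp] lemma latticePt_re (n m : ℤ) : (latticePt n m).re = exp n * m := by
  simp [latticePt, -Complex.ofReal_exp]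

@[simp] lemma latticePt_im (n m : ℤ) : (latticePt n m).im = exp n := by
  simp [latticePt, -Complex.ofReal_exp]

lemma abs_sub_log_im_le_of_hypDist_latticePt_le (hy : 0 < y.im)
    (h : hypDist (latticePt n m) y ≤ R) : |(n : ℝ) - log y.im| ≤ R := by
  simpa using abs_log_im_sub_log_im_le_of_hypDist_le (by simpa using exp_pos _) hy h

lemma abs_sub_re_div_exp_le_of_hypDist_latticePt_le (hy : 0 < y.im)
    (h : hypDist (latticePt n m) y ≤ R) :
    |(m : ℝ) - y.re / exp n| ≤ sqrt (2 * (exp (2 * R) - 1)) := by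
  have := abs_re_sub_re_div_im_le_of_hypDist_le (by simpa using exp_pos _) hy h
  rwa [latticePt_re, latticePt_im, sub_div, mul_div_cancel_left₀ _ (exp_pos _).ne'] at this

end Lattice

/-- points of `X = {(eⁿm, eⁿ)}` within hyperbolic distance `R` of a
fixed point `(u,a)` satisfy `|n − log a| ≤ R` and
`|m − e^{−k} a⁻¹ u| ≤ √(2(e^{2R}−1))` where `k = n − log a`; consequently `X` is a
quasi-lattice in the hyperbolic plane. -/
theorem lattice_is_quasi_lattice_in_hyperbolic_plane :
    (∀ (n m : ℤ) (u a R : ℝ), 0 < a → 0 ≤ R →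
      hypDist (latticePt n m) ((u : ℂ) + (a : ℂ) * Complex.I) ≤ R →
      |(n : ℝ) - Real.log a| ≤ R ∧
      |(m : ℝ) - Real.exp (-((n : ℝ) - Real.log a)) * a⁻¹ * u| ≤
        Real.sqrt (2 * (Real.exp (2 * R) - 1))) ∧
    (∀ R : ℝ, 0 < R → ∃ M : ℕ, ∀ y : ℂ, 0 < y.im →
      {p : ℤ × ℤ | hypDist (latticePt p.1 p.2) y ≤ R}.Finite ∧
      {p : ℤ × ℤ | hypDist (latticePt p.1 p.2) y ≤ R}.ncard ≤ M) := by
  refine ⟨fun n m u a R ha _ h => ?_, fun R _ => ?_⟩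
  · have hy : 0 < ((u : ℂ) + a * Complex.I).im := by simpa using ha
    have hcentre : exp (-(n - log a)) * a⁻¹ * u = u / exp n := by
      rw [exp_neg, exp_sub, exp_log ha]
      field_simp
    rw [hcentre]
    exact ⟨by simpa using abs_sub_log_im_le_of_hypDist_latticePt_le hy h,
      by simpa using abs_sub_re_div_exp_le_of_hypDist_latticePt_le hy h⟩
  · set B := sqrt (2 * (exp (2 * R) - 1))
    refine ⟨(⌈2 * R⌉₊ + 1) * (⌈2 * B⌉₊ + 1), fun y hy => ?_⟩
    have hsub : {p : ℤ × ℤ | hypDist (latticePt p.1 p.2) y ≤ R} ⊆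
        intTube (log y.im) R B (y.re / exp ·) := fun p hp =>
      mem_intTube.2 ⟨abs_sub_log_im_le_of_hypDist_latticePt_le hy hp,
        abs_sub_re_div_exp_le_of_hypDist_latticePt_le hy hp⟩
    refine ⟨(Finset.finite_toSet _).subset hsub, ?_⟩
    calc _ ≤ (intTube _ _ _ _ : Set (ℤ × ℤ)).ncard :=
          Set.ncard_le_ncard hsub (Finset.finite_toSet _)
      _ ≤ _ := by rw [Set.ncard_coe_finset]; exact card_intTube_le
end

section
/- Let G be a compactly generated locally compact group with Haar measure λ and compact symmetric generating neighbourhood K, with a rough Cayley graph X (a uniformly locally finite connected graph with a proper cobounded quasi-action of G). Then there exist constants a, b > 0 and positive integers C, r such that for every positive integer m: λ(Kᵐ) ≤ a·|N_{Cm+r}(x₀)| and |N_m(x₀)| ≤ b·λ(K^{C(m+2r)+1}), where N_m(x₀) is the ball of radius m around a fixed vertex x₀ in the graph metric. Consequently G and X have the same type of growth (polynomial, intermediate, or exponential). -/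
open Pointwise

/-- Quasi-isometric-embedding bounds with respect to arbitrary distance functions. -/
def QIEmb {α β : Type*} (d₁ : α → α → ℝ) (d₂ : β → β → ℝ) (C r : ℝ) (f : α → β) : Prop :=
  ∀ x y : α, C⁻¹ * d₁ x y - r ≤ d₂ (f x) (f y) ∧ d₂ (f x) (f y) ≤ C * d₁ x y + r

/-- The graph metric of a graph, as a real-valued distance. -/
noncomputable def grDist {V : Type*} (Gr : SimpleGraph V) (u v : V) : ℝ := (Gr.dist u v : ℝ)

/-- `X` (the vertex set of `Gr`) is a rough Cayley graph of `G` via the quasi-action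
`act` with constants `C₁, r₁`: `Gr` is a uniformly locally finite connected graph
and `act` is a proper cobounded `(C₁,r₁)`-quasi-action of `G` on it. -/
def IsRoughCayleyGraph {G V : Type*} [Group G] [TopologicalSpace G]
    (Gr : SimpleGraph V) (act : G → V → V) (C₁ r₁ : ℝ) : Prop :=
  Gr.Connected ∧
  (∃ M : ℕ, ∀ v : V, (Gr.neighborSet v).Finite ∧ (Gr.neighborSet v).ncard ≤ M) ∧
  (∀ s : G, QIEmb (grDist Gr) (grDist Gr) C₁ r₁ (act s) ∧
    ∀ y : V, ∃ x : V, grDist Gr (act s x) y ≤ r₁) ∧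
  (∀ x : V, grDist Gr (act 1 x) x ≤ r₁) ∧
  (∀ (s t : G) (x : V), grDist Gr (act s (act t x)) (act (s * t) x) ≤ r₁) ∧
  (∀ L : Set G, IsCompact L → ∀ x : V, ∃ R : ℝ, ∀ s ∈ L, grDist Gr (act s x) x ≤ R) ∧
  (∀ R : ℝ, ∀ x : V, IsCompact (closure {s : G | grDist Gr (act s x) x ≤ R})) ∧
  (∀ x y : V, ∃ s : G, grDist Gr (act s x) y ≤ r₁)

/-!
The orbit map `g ↦ g • x₀` is coarsely Lipschitz for the word length of `K`, so `g • x₀` lies in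
`N_{O(m)}(x₀)` for `g ∈ Kᵐ`, and its fibres lie in left translates of the relatively compact set
`P` of elements moving `x₀` by at most `4 r₁`; hence `λ(Kᵐ) ≤ λ(P) |N_{O(m)}(x₀)|`.

Conversely, pick `g_v` with `g_v • x₀` near `v` for each vertex `v`. Following a geodesic from
`v` to `x₀` edge by edge writes `g_v` as a product of `d(x₀, v) + 1` elements moving `x₀` a bounded
distance; these form a relatively compact set, hence lie in a fixed power of `K`. So the
translates `g_v • int K`, `v ∈ N_m(x₀)`, lie in `K^{O(m)}`, and they overlap at most a bounded
number of times, because overlapping translates have indices at bounded distance and balls of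
fixed radius have bounded size. Comparing measures bounds `|N_m(x₀)| λ(int K)`.

Both comparisons are affine in `m`, so they transfer polynomial bounds in both directions.
-/

open MeasureTheory Topology
open scoped ENNReal Finset

lemma grDist_nonneg {V : Type*} (Gr : SimpleGraph V) (u v : V) : 0 ≤ grDist Gr u v :=
  Nat.cast_nonneg _

lemma grDist_comm {V : Type*} (Gr : SimpleGraph V) (u v : V) : grDist Gr u v = grDist Gr v u := by
  rw [grDist, grDist, SimpleGraph.dist_comm]

lemma grDist_le_natCast_iff {V : Type*} (Gr : SimpleGraph V) (u v : V) (n : ℕ) :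
    grDist Gr u v ≤ n ↔ Gr.dist u v ≤ n :=
  Nat.cast_le

namespace SimpleGraph.Connected

variable {V : Type*} {Gr : SimpleGraph V}

lemma grDist_triangle (hconn : Gr.Connected) (u v w : V) :
    grDist Gr u w ≤ grDist Gr u v + grDist Gr v w := by
  unfold grDist
  exact_mod_cast hconn.dist_triangle

lemma exists_dist_le_and_adj_of_dist_le_succ (hconn : Gr.Connected) {c v : V} {n : ℕ}
    (hv : Gr.dist c v ≤ n + 1) : ∃ u, Gr.dist c u ≤ n ∧ (v = u ∨ Gr.Adj u v) := by
  obtain ⟨p, hp⟩ := hconn.exists_walk_length_eq_dist v c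
  cases p with
  | nil => exact ⟨_, by simp, Or.inl rfl⟩
  | cons hadj q =>
    refine ⟨_, ?_, Or.inr hadj.symm⟩
    rw [SimpleGraph.dist_comm] at hv ⊢
    have := SimpleGraph.dist_le q
    simp only [SimpleGraph.Walk.length_cons] at hp
    omega

lemma exists_finset_setOf_dist_le (hconn : Gr.Connected) {M : ℕ}
    (hM : ∀ v, (Gr.neighborSet v).Finite ∧ (Gr.neighborSet v).ncard ≤ M) (c : V) (n : ℕ) :
    ∃ F : Finset V, {v | Gr.dist c v ≤ n} ⊆ F ∧ F.card ≤ (M + 1) ^ n := by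
  classical
  induction n with
  | zero =>
    refine ⟨{c}, fun v hv => ?_, by simp⟩
    simp [(hconn.dist_eq_zero_iff).1 (Nat.le_zero.1 hv)]
  | succ n ih =>
    obtain ⟨F, hF, hFcard⟩ := ih
    refine ⟨F.biUnion fun u => insert u (hM u).1.toFinset, fun v hv => ?_, ?_⟩
    · obtain ⟨u, hu, hvu⟩ := hconn.exists_dist_le_and_adj_of_dist_le_succ hv
      exact Finset.mem_biUnion.2 ⟨u, hF hu, by simpa using hvu⟩
    · calc (F.biUnion _).card ≤ ∑ u ∈ F, (insert u (hM u).1.toFinset).card :=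
            Finset.card_biUnion_le
        _ ≤ ∑ _u ∈ F, (M + 1) := Finset.sum_le_sum fun u _ => by
            grw [Finset.card_insert_le, ← Set.ncard_eq_toFinset_card _ (hM u).1, (hM u).2]
        _ ≤ (M + 1) ^ (n + 1) := by
            rw [Finset.sum_const, smul_eq_mul, pow_succ]
            exact Nat.mul_le_mul_right _ hFcard

lemma finite_setOf_dist_le_and_ncard_le (hconn : Gr.Connected) {M : ℕ}
    (hM : ∀ v, (Gr.neighborSet v).Finite ∧ (Gr.neighborSet v).ncard ≤ M) (c : V) (n : ℕ) :
    {v | Gr.dist c v ≤ n}.Finite ∧ {v | Gr.dist c v ≤ n}.ncard ≤ (M + 1) ^ n := by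
  obtain ⟨F, hF, hFcard⟩ := hconn.exists_finset_setOf_dist_le hM c n
  exact ⟨F.finite_toSet.subset hF,
    (Set.ncard_le_ncard hF F.finite_toSet).trans (by rwa [Set.ncard_coe_finset])⟩

end SimpleGraph.Connected

lemma IsCompact.exists_subset_pow {G : Type*} [Group G] [TopologicalSpace G]
    [IsTopologicalGroup G] {K L : Set G} (hL : IsCompact L) (hK : K ∈ 𝓝 1)
    (hgen : ∀ g, ∃ n : ℕ, g ∈ K ^ n) : ∃ n : ℕ, L ⊆ K ^ n := by
  have hmono : Monotone fun n : ℕ => K ^ n * interior K := fun m n hmn =>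
    Set.mul_subset_mul_right (Set.pow_subset_pow_right (mem_of_mem_nhds hK) hmn)
  have hcover : L ⊆ ⋃ n : ℕ, K ^ n * interior K := fun g _ =>
    let ⟨n, hn⟩ := hgen g
    Set.mem_iUnion.2 ⟨n, g, hn, 1, mem_interior_iff_mem_nhds.2 hK, mul_one g⟩
  obtain ⟨n, hn⟩ := hL.elim_directed_cover _ (fun n => isOpen_interior.mul_left) hcover
    hmono.directed_le
  exact ⟨n + 1, hn.trans (pow_succ K n ▸ Set.mul_subset_mul_left interior_subset)⟩

lemma inv_mul_mem_mul_inv_of_mem_smul_set {G : Type*} [Group G] {U : Set G} {a b y : G}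
    (ha : y ∈ a • U) (hb : y ∈ b • U) : b⁻¹ * a ∈ U * U⁻¹ := by
  obtain ⟨u, hu, rfl⟩ := ha
  obtain ⟨u', hu', hbu'⟩ := hb
  refine ⟨u', hu', u⁻¹, Set.inv_mem_inv.2 hu, ?_⟩
  simp only [smul_eq_mul] at hbu' ⊢
  rw [eq_inv_mul_iff_mul_eq, ← mul_assoc, hbu', mul_inv_cancel_right]

def PolynomiallyBounded (f : ℕ → ℝ≥0∞) : Prop :=
  ∃ (d : ℕ) (c : ℝ≥0∞), c ≠ ⊤ ∧ ∀ m : ℕ, 0 < m → f m ≤ c * (m : ℝ≥0∞) ^ d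

lemma polynomiallyBounded_natCast_iff (f : ℕ → ℕ) :
    PolynomiallyBounded (fun m => (f m : ℝ≥0∞)) ↔
      ∃ d c : ℕ, ∀ m : ℕ, 0 < m → f m ≤ c * m ^ d := by
  constructor
  · rintro ⟨d, c, hc, hf⟩
    beta_reduce at hf
    obtain ⟨c', hc'⟩ := ENNReal.exists_nat_gt hc
    refine ⟨d, c', fun m hm => ?_⟩
    have h := (hf m hm).trans (mul_le_mul_left hc'.le _)
    exact_mod_cast h
  · rintro ⟨d, c, hf⟩
    refine ⟨d, c, ENNReal.natCast_ne_top c, fun m hm => ?_⟩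
    beta_reduce
    exact_mod_cast hf m hm

lemma PolynomiallyBounded.of_le_mul_comp {f g : ℕ → ℝ≥0∞} (hg : PolynomiallyBounded g)
    {a : ℝ≥0∞} (ha : a ≠ ⊤) {A B : ℕ} (hA : 1 ≤ A)
    (hfg : ∀ m : ℕ, 0 < m → f m ≤ a * g (A * m + B)) : PolynomiallyBounded f := by
  obtain ⟨d, c, hc, hgc⟩ := hg
  refine ⟨d, a * c * ((A + B : ℕ) : ℝ≥0∞) ^ d, by finiteness, fun m hm => ?_⟩
  have hAB : A * m + B ≤ (A + B) * m := by nlinarith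
  calc f m ≤ a * g (A * m + B) := hfg m hm
    _ ≤ a * (c * ((A * m + B : ℕ) : ℝ≥0∞) ^ d) := by gcongr; exact hgc _ (by positivity)
    _ ≤ a * (c * (((A + B) * m : ℕ) : ℝ≥0∞) ^ d) := by gcongr
    _ = a * c * ((A + B : ℕ) : ℝ≥0∞) ^ d * (m : ℝ≥0∞) ^ d := by
        rw [Nat.cast_mul, mul_pow]; ring

section LeftInvariant

variable {G : Type*} [Group G] [MeasurableSpace G] (μ : Measure G) [μ.IsMulLeftInvariant]

lemma measure_le_card_mul_of_inv_mul_mem {ι : Type*} (f : G → ι) {A P : Set G} (F : Finset ι)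
    (hA : ∀ g ∈ A, f g ∈ F) (hP : ∀ g₀ ∈ A, ∀ g ∈ A, f g = f g₀ → g₀⁻¹ * g ∈ P) :
    μ A ≤ F.card * μ P := by
  have hfiber : ∀ i, μ {g ∈ A | f g = i} ≤ μ P := by
    intro i
    rcases Set.eq_empty_or_nonempty {g ∈ A | f g = i} with he | ⟨g₀, hg₀A, rfl⟩
    · simp [he]
    calc μ {g ∈ A | f g = f g₀} ≤ μ (g₀ • P) := measure_mono fun g ⟨hgA, hg⟩ =>
          Set.mem_smul_set.2 ⟨g₀⁻¹ * g, hP g₀ hg₀A g hgA hg, mul_inv_cancel_left g₀ g⟩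
      _ = μ P := measure_smul μ g₀ P
  calc μ A ≤ μ (⋃ i ∈ F, {g ∈ A | f g = i}) :=
        measure_mono fun g hg => Set.mem_biUnion (hA g hg) ⟨hg, rfl⟩
    _ ≤ ∑ i ∈ F, μ {g ∈ A | f g = i} := measure_biUnion_finset_le _ _
    _ ≤ ∑ _i ∈ F, μ P := Finset.sum_le_sum fun i _ => hfiber i
    _ = F.card * μ P := by rw [Finset.sum_const, nsmul_eq_mul]

open scoped Classical in
lemma card_mul_measure_le_of_card_filter_le [MeasurableMul G] {ι : Type*} (g : ι → G)
    {U A : Set G} (hU : MeasurableSet U) (F : Finset ι) {B : ℕ} (hA : ∀ i ∈ F, g i • U ⊆ A)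
    (hB : ∀ x, #{i ∈ F | x ∈ g i • U} ≤ B) : F.card * μ U ≤ B * μ A := by
  set T : Set G := ⋃ i ∈ F, g i • U
  have hmeas : ∀ i, MeasurableSet (g i • U) := fun i => hU.const_smul (g i)
  have hT : MeasurableSet T := F.measurableSet_biUnion fun i _ => hmeas i
  have hpointwise : ∀ x, ∑ i ∈ F, (g i • U).indicator 1 x ≤ (B : ℝ≥0∞) * T.indicator 1 x := by
    intro x
    by_cases hx : x ∈ T
    · simp only [Set.indicator_apply, Pi.one_apply, Finset.sum_boole, hx, if_true, mul_one]
      exact_mod_cast hB x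
    · have : ∀ i ∈ F, x ∉ g i • U := fun i hi hxi => hx (Set.mem_biUnion hi hxi)
      rw [Finset.sum_eq_zero fun i hi => Set.indicator_of_notMem (this i hi) _]
      exact zero_le
  calc F.card * μ U = ∑ i ∈ F, ∫⁻ x, (g i • U).indicator 1 x ∂μ := by
        simp [lintegral_indicator_one (hmeas _), measure_smul]
    _ = ∫⁻ x, ∑ i ∈ F, (g i • U).indicator 1 x ∂μ :=
        (lintegral_finsetSum _ fun i _ => measurable_one.indicator (hmeas i)).symm
    _ ≤ ∫⁻ x, B * T.indicator 1 x ∂μ := lintegral_mono hpointwise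
    _ = B * μ T := by
        rw [lintegral_const_mul _ (measurable_one.indicator hT), lintegral_indicator_one hT]
    _ ≤ B * μ A := by gcongr; exact Set.iUnion₂_subset hA

end LeftInvariant

def displacementSet {G V : Type*} (Gr : SimpleGraph V) (act : G → V → V) (x : V) (R : ℝ) :
    Set G :=
  {g | grDist Gr (act g x) x ≤ R}

namespace IsRoughCayleyGraph

variable {G V : Type*} [Group G] [TopologicalSpace G] {Gr : SimpleGraph V} {act : G → V → V}
  {C₁ r₁ : ℝ}

lemma finite_setOf_dist_le (h : IsRoughCayleyGraph Gr act C₁ r₁) (c : V) (n : ℕ) :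
    {v | Gr.dist c v ≤ n}.Finite :=
  have ⟨hconn, ⟨_, hM⟩, _⟩ := h
  (hconn.finite_setOf_dist_le_and_ncard_le hM c n).1

lemma dist_act_mul_le (h : IsRoughCayleyGraph Gr act C₁ r₁) (g k : G) (x : V) :
    grDist Gr (act (g * k) x) (act g x) ≤ C₁ * grDist Gr (act k x) x + 2 * r₁ := by
  have ⟨hconn, _, hQI, _, hcomp, _⟩ := h
  have h₁ := hcomp g k x
  have h₂ := ((hQI g).1 (act k x) x).2
  have := hconn.grDist_triangle (act (g * k) x) (act g (act k x)) (act g x)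
  rw [grDist_comm] at h₁
  linarith

lemma dist_act_le_of_mul (h : IsRoughCayleyGraph Gr act C₁ r₁) (g k : G) (x : V) :
    grDist Gr (act k x) x ≤ C₁ * grDist Gr (act (g * k) x) (act g x) + 4 * r₁ := by
  have ⟨hconn, _, hQI, hone, hcomp, _⟩ := h
  have h₁ := hcomp g⁻¹ (g * k) x
  have h₂ := ((hQI g⁻¹).1 (act (g * k) x) (act g x)).2
  have h₃ := hcomp g⁻¹ g x
  have h₄ := hone x
  rw [inv_mul_cancel_left, grDist_comm] at h₁
  rw [inv_mul_cancel] at h₃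
  have := hconn.grDist_triangle (act k x) (act g⁻¹ (act (g * k) x)) x
  have := hconn.grDist_triangle (act g⁻¹ (act (g * k) x)) (act g⁻¹ (act g x)) x
  have := hconn.grDist_triangle (act g⁻¹ (act g x)) (act 1 x) x
  linarith

lemma inv_mul_mem_displacementSet (h : IsRoughCayleyGraph Gr act C₁ r₁) {g₀ g : G} {x : V}
    (hg : act g x = act g₀ x) : g₀⁻¹ * g ∈ displacementSet Gr act x (4 * r₁) := by
  have := h.dist_act_le_of_mul g₀ (g₀⁻¹ * g) x
  rw [mul_inv_cancel_left, hg] at this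
  simpa [displacementSet, grDist] using this

lemma dist_le_of_inv_mul_mem (h : IsRoughCayleyGraph Gr act C₁ r₁) (hC₁ : 0 ≤ C₁) {S : Set G}
    {x v w : V} {R : ℝ} (hR : ∀ k ∈ S, grDist Gr (act k x) x ≤ R) {g g' : G}
    (hg : grDist Gr (act g x) v ≤ r₁) (hg' : grDist Gr (act g' x) w ≤ r₁) (hS : g'⁻¹ * g ∈ S) :
    grDist Gr v w ≤ C₁ * R + 4 * r₁ := by
  have ⟨hconn, _⟩ := h
  have h₁ := h.dist_act_mul_le g' (g'⁻¹ * g) x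
  rw [mul_inv_cancel_left] at h₁
  have := mul_le_mul_of_nonneg_left (hR _ hS) hC₁
  have := hconn.grDist_triangle v (act g x) w
  have := hconn.grDist_triangle (act g x) (act g' x) w
  rw [grDist_comm] at hg
  linarith

lemma dist_act_le_of_mem_pow (h : IsRoughCayleyGraph Gr act C₁ r₁) (hC₁ : 0 ≤ C₁) {K : Set G}
    {x : V} {R : ℝ} (hR : ∀ k ∈ K, grDist Gr (act k x) x ≤ R) {m : ℕ} {g : G} (hg : g ∈ K ^ m) :
    grDist Gr (act g x) x ≤ m * (C₁ * R + 2 * r₁) + r₁ := by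
  have ⟨hconn, _, _, hone, _⟩ := h
  induction m generalizing g with
  | zero =>
    rw [pow_zero, Set.mem_one] at hg
    subst hg
    simpa using hone x
  | succ m ih =>
    rw [pow_succ] at hg
    obtain ⟨g', hg', k, hk, rfl⟩ := hg
    have := hconn.grDist_triangle (act (g' * k) x) (act g' x) x
    have := h.dist_act_mul_le g' k x
    have := mul_le_mul_of_nonneg_left (hR k hk) hC₁
    have := ih hg'
    push_cast
    linarith

lemma mem_displacementSet_pow_of_walk (h : IsRoughCayleyGraph Gr act C₁ r₁) (hC₁ : 0 ≤ C₁)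
    {v y : V} (q : Gr.Walk v y) {s : G} (hs : grDist Gr (act s y) v ≤ r₁) :
    s ∈ displacementSet Gr act y (C₁ * (2 * r₁ + 1) + 4 * r₁) ^ (q.length + 1) := by
  have ⟨hconn, _, _, _, _, _, _, hcobdd⟩ := h
  have hr₁ : 0 ≤ r₁ := (grDist_nonneg _ _ _).trans hs
  induction q generalizing s with
  | nil =>
    rw [SimpleGraph.Walk.length_nil, zero_add, pow_one]
    exact hs.trans (by nlinarith)
  | @cons u w y hadj p ih =>
    obtain ⟨t, ht⟩ := hcobdd y w
    have hst : grDist Gr (act s y) (act t y) ≤ 2 * r₁ + 1 := by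
      have huw : grDist Gr u w ≤ 1 := by
        unfold grDist
        exact_mod_cast (SimpleGraph.dist_eq_one_iff_adj.2 hadj).le
      have := hconn.grDist_triangle (act s y) u (act t y)
      have := hconn.grDist_triangle u w (act t y)
      rw [grDist_comm] at ht
      linarith
    have hk : t⁻¹ * s ∈ displacementSet Gr act y (C₁ * (2 * r₁ + 1) + 4 * r₁) := by
      have := h.dist_act_le_of_mul t (t⁻¹ * s) y
      rw [mul_inv_cancel_left] at this
      exact this.trans (by gcongr)
    have := Set.mul_mem_mul (ih ht) hk
    rwa [mul_inv_cancel_left, ← pow_succ] at this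

lemma mem_displacementSet_pow_of_dist_le (h : IsRoughCayleyGraph Gr act C₁ r₁) (hC₁ : 0 ≤ C₁)
    {v y : V} {s : G} {m : ℕ} (hs : grDist Gr (act s y) v ≤ r₁) (hv : Gr.dist v y ≤ m) :
    s ∈ displacementSet Gr act y (C₁ * (2 * r₁ + 1) + 4 * r₁) ^ (m + 1) := by
  have ⟨hconn, _, _, hone, _⟩ := h
  obtain ⟨q, hq⟩ := hconn.exists_walk_length_eq_dist v y
  have h1 : (1 : G) ∈ displacementSet Gr act y (C₁ * (2 * r₁ + 1) + 4 * r₁) := by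
    have hr₁ : 0 ≤ r₁ := (grDist_nonneg _ _ _).trans hs
    exact (hone y).trans (by nlinarith)
  exact Set.pow_subset_pow_right h1 (by omega) (h.mem_displacementSet_pow_of_walk hC₁ q hs)

lemma measure_pow_le_ncard_mul [MeasurableSpace G] (μ : Measure G) [μ.IsMulLeftInvariant]
    (h : IsRoughCayleyGraph Gr act C₁ r₁) (hC₁ : 0 ≤ C₁) {K : Set G} {x : V} {R : ℝ}
    (hR : ∀ k ∈ K, grDist Gr (act k x) x ≤ R) {C r : ℕ} (hC : C₁ * R + 2 * r₁ ≤ C)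
    (hr : r₁ ≤ r) (m : ℕ) :
    μ (K ^ m) ≤ {v | Gr.dist x v ≤ C * m + r}.ncard * μ (displacementSet Gr act x (4 * r₁)) := by
  have hfin := h.finite_setOf_dist_le x (C * m + r)
  rw [Set.ncard_eq_toFinset_card _ hfin]
  refine measure_le_card_mul_of_inv_mul_mem μ (fun g => act g x) _ (fun g hg => ?_)
    fun _ _ _ _ => h.inv_mul_mem_displacementSet
  have hdist := h.dist_act_le_of_mem_pow hC₁ hR hg
  have hm := mul_le_mul_of_nonneg_left hC (Nat.cast_nonneg m)
  have : grDist Gr x (act g x) ≤ ((C * m + r : ℕ) : ℝ) := by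
    rw [grDist_comm]
    push_cast
    linarith
  rw [Set.Finite.mem_toFinset]
  exact (grDist_le_natCast_iff _ _ _ _).1 this

open scoped Classical in
lemma exists_card_filter_mem_smul_le (h : IsRoughCayleyGraph Gr act C₁ r₁) (hC₁ : 0 ≤ C₁)
    {U : Set G} {x : V} {R : ℝ} (hR : ∀ k ∈ U * U⁻¹, grDist Gr (act k x) x ≤ R) {sel : V → G}
    (hsel : ∀ v, grDist Gr (act (sel v) x) v ≤ r₁) :
    ∃ B : ℕ, ∀ (F : Finset V) (y : G), #{v ∈ F | y ∈ sel v • U} ≤ B := by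
  have ⟨hconn, ⟨M, hM⟩, _⟩ := h
  set n := ⌈C₁ * R + 4 * r₁⌉₊
  refine ⟨(M + 1) ^ n, fun F y => ?_⟩
  rcases Finset.eq_empty_or_nonempty {v ∈ F | y ∈ sel v • U} with he | ⟨v₀, hv₀⟩
  · simp [he]
  have hsub : (({v ∈ F | y ∈ sel v • U} : Finset V) : Set V) ⊆ {w | Gr.dist v₀ w ≤ n} := by
    intro w hw
    have hdist := h.dist_le_of_inv_mul_mem hC₁ hR (hsel v₀) (hsel w)
      (inv_mul_mem_mul_inv_of_mem_smul_set (Finset.mem_filter.1 hv₀).2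
        (Finset.mem_filter.1 hw).2)
    exact (grDist_le_natCast_iff _ _ _ _).1 (hdist.trans (Nat.le_ceil _))
  obtain ⟨hfin, hcard⟩ := hconn.finite_setOf_dist_le_and_ncard_le hM v₀ n
  rw [← Set.ncard_coe_finset]
  exact (Set.ncard_le_ncard hsub hfin).trans hcard

lemma ncard_le_mul_measure_pow [IsTopologicalGroup G] [MeasurableSpace G] [BorelSpace G]
    (μ : Measure G) [μ.IsHaarMeasure] (h : IsRoughCayleyGraph Gr act C₁ r₁) (hC₁ : 0 ≤ C₁)
    {K : Set G} (hK : IsCompact K) (hK1 : K ∈ 𝓝 1) (x : V) {N : ℕ}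
    (hN : displacementSet Gr act x (C₁ * (2 * r₁ + 1) + 4 * r₁) ⊆ K ^ N) :
    ∃ b : ℝ≥0∞, 0 < b ∧ b ≠ ⊤ ∧ ∀ m : ℕ,
      ({v | Gr.dist x v ≤ m}.ncard : ℝ≥0∞) ≤ b * μ (K ^ (N * (m + 1) + 1)) := by
  have ⟨_, _, _, _, _, hbdd, _, hcobdd⟩ := h
  choose sel hsel using hcobdd x
  obtain ⟨R, hR⟩ := hbdd _ (hK.mul hK.inv) x
  obtain ⟨B, hB⟩ := h.exists_card_filter_mem_smul_le hC₁
    (fun k hk => hR k <|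
      Set.mul_subset_mul interior_subset (Set.inv_subset_inv.2 interior_subset) hk) hsel
  have hU0 : μ (interior K) ≠ 0 :=
    (isOpen_interior.measure_pos μ ⟨1, mem_interior_iff_mem_nhds.2 hK1⟩).ne'
  have hUtop : μ (interior K) ≠ ⊤ :=
    ((measure_mono interior_subset).trans_lt hK.measure_lt_top).ne
  refine ⟨(B + 1) / μ (interior K), ENNReal.div_pos (by positivity) hUtop,
    ENNReal.div_ne_top (by finiteness) hU0, fun m => ?_⟩
  have hfin := h.finite_setOf_dist_le x m
  have hsub : ∀ v ∈ hfin.toFinset, sel v • interior K ⊆ K ^ (N * (m + 1) + 1) := by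
    intro v hv
    rw [Set.Finite.mem_toFinset, Set.mem_ofPred_eq, SimpleGraph.dist_comm] at hv
    have hsel_mem := Set.pow_subset_pow_left hN
      (h.mem_displacementSet_pow_of_dist_le hC₁ (hsel v) hv)
    rw [← pow_mul] at hsel_mem
    rw [pow_succ]
    exact Set.smul_set_subset_mul hsel_mem |>.trans (Set.mul_subset_mul_left interior_subset)
  have hpack := card_mul_measure_le_of_card_filter_le μ sel measurableSet_interior _ hsub
    (hB hfin.toFinset)
  rw [Set.ncard_eq_toFinset_card _ hfin, ← ENNReal.mul_div_right_comm]
  calc (#hfin.toFinset : ℝ≥0∞) = #hfin.toFinset * μ (interior K) / μ (interior K) :=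
        (ENNReal.mul_div_cancel_right hU0 hUtop).symm
    _ ≤ B * μ (K ^ (N * (m + 1) + 1)) / μ (interior K) := ENNReal.div_le_div_right hpack _
    _ ≤ (B + 1) * μ (K ^ (N * (m + 1) + 1)) / μ (interior K) := by gcongr; exact le_self_add

lemma exists_growth_comparison [IsTopologicalGroup G] [MeasurableSpace G] [BorelSpace G]
    (μ : Measure G) [μ.IsHaarMeasure] {K : Set G} (hK : IsCompact K) (hK1 : K ∈ 𝓝 1)
    (hgen : ∀ g : G, ∃ n : ℕ, g ∈ K ^ n) (h : IsRoughCayleyGraph Gr act C₁ r₁)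
    (hC₁ : 0 ≤ C₁) (x₀ : V) :
    ∃ (a b : ℝ≥0∞) (C r : ℕ), 0 < a ∧ a ≠ ⊤ ∧ 0 < b ∧ b ≠ ⊤ ∧ 1 ≤ C ∧ 1 ≤ r ∧
      ∀ m : ℕ, 0 < m →
        μ (K ^ m) ≤ a * ({v : V | Gr.dist x₀ v ≤ C * m + r}.ncard : ℝ≥0∞) ∧
        ({v : V | Gr.dist x₀ v ≤ m}.ncard : ℝ≥0∞) ≤ b * μ (K ^ (C * (m + 2 * r) + 1)) := by
  have ⟨_, _, _, _, _, hbdd, hproper, _⟩ := h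
  obtain ⟨RK, hRK⟩ := hbdd K hK x₀
  obtain ⟨N, hN⟩ := (hproper (C₁ * (2 * r₁ + 1) + 4 * r₁) x₀).exists_subset_pow hK1 hgen
  obtain ⟨b, hb, hbtop, hball⟩ :=
    h.ncard_le_mul_measure_pow μ hC₁ hK hK1 x₀ (subset_closure.trans hN)
  have hPtop : μ (displacementSet Gr act x₀ (4 * r₁)) ≠ ⊤ :=
    ((measure_mono subset_closure).trans_lt (hproper _ x₀).measure_lt_top).ne
  refine ⟨μ (displacementSet Gr act x₀ (4 * r₁)) + 1, b, ⌈C₁ * RK + 2 * r₁⌉₊ + N + 1,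
    ⌈r₁⌉₊ + 1, by positivity, by finiteness, hb, hbtop, by omega, by omega,
    fun m hm => ⟨?_, ?_⟩⟩
  · have hC : C₁ * RK + 2 * r₁ ≤ ((⌈C₁ * RK + 2 * r₁⌉₊ + N + 1 : ℕ) : ℝ) := by
      push_cast
      linarith [Nat.le_ceil (C₁ * RK + 2 * r₁), (N.cast_nonneg : (0 : ℝ) ≤ N)]
    have hr : r₁ ≤ ((⌈r₁⌉₊ + 1 : ℕ) : ℝ) := by
      push_cast
      linarith [Nat.le_ceil r₁]
    grw [h.measure_pow_le_ncard_mul μ hC₁ hRK hC hr m, mul_comm, ← le_self_add]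
  · have hK1' : (1 : G) ∈ K := mem_of_mem_nhds hK1
    grw [hball m, Set.pow_subset_pow_right hK1' (by nlinarith :
      N * (m + 1) + 1 ≤ (⌈C₁ * RK + 2 * r₁⌉₊ + N + 1) * (m + 2 * (⌈r₁⌉₊ + 1)) + 1)]

end IsRoughCayleyGraph

theorem growth_of_group_equals_growth_of_rough_cayley_graph_general
    {G V : Type*} [Group G] [TopologicalSpace G] [IsTopologicalGroup G]
    [MeasurableSpace G] [BorelSpace G]
    (μ : MeasureTheory.Measure G) [μ.IsHaarMeasure]
    (K : Set G) (hKcomp : IsCompact K) (hKnhds : K ∈ nhds (1 : G))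
    (hKgen : ∀ g : G, ∃ n : ℕ, g ∈ K ^ n)
    (Gr : SimpleGraph V) (act : G → V → V) (C₁ r₁ : ℝ) (hC₁ : 1 ≤ C₁)
    (hrcg : IsRoughCayleyGraph Gr act C₁ r₁) (x₀ : V) :
    (∃ (a b : ENNReal) (C r : ℕ), 0 < a ∧ a ≠ ⊤ ∧ 0 < b ∧ b ≠ ⊤ ∧ 1 ≤ C ∧ 1 ≤ r ∧
      ∀ m : ℕ, 0 < m →
        μ (K ^ m) ≤ a * ({v : V | Gr.dist x₀ v ≤ C * m + r}.ncard : ENNReal) ∧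
        ({v : V | Gr.dist x₀ v ≤ m}.ncard : ENNReal) ≤ b * μ (K ^ (C * (m + 2 * r) + 1))) ∧
    ((∃ (d : ℕ) (c : ENNReal), c ≠ ⊤ ∧ ∀ m : ℕ, 0 < m → μ (K ^ m) ≤ c * (m : ENNReal) ^ d) ↔
      (∃ (d c : ℕ), ∀ m : ℕ, 0 < m → {v : V | Gr.dist x₀ v ≤ m}.ncard ≤ c * m ^ d)) := by
  obtain ⟨a, b, C, r, ha, hatop, hb, hbtop, hC, hr, hcomp⟩ :=
    hrcg.exists_growth_comparison μ hKcomp hKnhds hKgen (zero_le_one.trans hC₁) x₀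
  refine ⟨⟨a, b, C, r, ha, hatop, hb, hbtop, hC, hr, hcomp⟩, ?_⟩
  rw [← polynomiallyBounded_natCast_iff]
  constructor
  · intro hG
    refine PolynomiallyBounded.of_le_mul_comp (g := fun m => μ (K ^ m)) hG hbtop hC
      (B := 2 * C * r + 1) fun m hm => ?_
    convert (hcomp m hm).2 using 4
    ring
  · intro hX
    exact hX.of_le_mul_comp hatop hC fun m hm => (hcomp m hm).1

/-- a compactly generated locally compact group and its rough Cayley
graph have the same growth: `λ(Kᵐ) ≤ a·|N_{Cm+r}(x₀)|` and
`|N_m(x₀)| ≤ b·λ(K^{C(m+2r)+1})`; in particular `G` has polynomial growth iff the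
graph does. -/
theorem growth_of_group_equals_growth_of_rough_cayley_graph
    {G V : Type*} [Group G] [TopologicalSpace G] [IsTopologicalGroup G] [LocallyCompactSpace G]
    [MeasurableSpace G] [BorelSpace G]
    (μ : MeasureTheory.Measure G) [μ.IsHaarMeasure]
    (K : Set G) (hKcomp : IsCompact K) (hKnhds : K ∈ nhds (1 : G)) (hKsymm : K⁻¹ = K)
    (hKgen : ∀ g : G, ∃ n : ℕ, g ∈ K ^ n)
    (Gr : SimpleGraph V) (act : G → V → V) (C₁ r₁ : ℝ) (hC₁ : 1 ≤ C₁) (hr₁ : 0 ≤ r₁)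
    (hrcg : IsRoughCayleyGraph Gr act C₁ r₁) (x₀ : V) :
    (∃ (a b : ENNReal) (C r : ℕ), 0 < a ∧ a ≠ ⊤ ∧ 0 < b ∧ b ≠ ⊤ ∧ 1 ≤ C ∧ 1 ≤ r ∧
      ∀ m : ℕ, 0 < m →
        μ (K ^ m) ≤ a * ({v : V | Gr.dist x₀ v ≤ C * m + r}.ncard : ENNReal) ∧
        ({v : V | Gr.dist x₀ v ≤ m}.ncard : ENNReal) ≤ b * μ (K ^ (C * (m + 2 * r) + 1))) ∧
    ((∃ (d : ℕ) (c : ENNReal), c ≠ ⊤ ∧ ∀ m : ℕ, 0 < m → μ (K ^ m) ≤ c * (m : ENNReal) ^ d) ↔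
      (∃ (d c : ℕ), ∀ m : ℕ, 0 < m → {v : V | Gr.dist x₀ v ≤ m}.ncard ≤ c * m ^ d)) :=
  growth_of_group_equals_growth_of_rough_cayley_graph_general μ K hKcomp hKnhds hKgen Gr act C₁ r₁
    hC₁ hrcg x₀
end
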